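/- arXiv:1304.6463 — 11 statements merged into one kernel-verified Lean document; each statement's English description precedes it below -/
import Mathlib

section
/- Every root of the quadratic factor of P_n is real and positive, and hence all n+1 roots of P_n are real and positive. Precisely: every complex root λ of P_n satisfies λ.im = 0 and λ.re > 0. -/
open Complex Finset

/-- The polynomial `P_n(λ)` of the non-autocatalytic metabolic cycle:
`P_n(λ) = ((θ₁ − λ)(θ_{n+2} + θ_{n+3} − λ) − θ₁θ_{n+2}) (θ_n + θ_{n+1} − λ) ∏_{i=2}^{n-1} (θ_i − λ)`. -/
noncomputable def Pfun (n : ℕ) (θ : ℕ → ℝ) (l : ℂ) : ℂ :=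
  (((θ 1 : ℂ) - l) * (((θ (n + 2) : ℂ) + (θ (n + 3) : ℂ)) - l) - (θ 1 : ℂ) * (θ (n + 2) : ℂ)) *
    (((θ n : ℂ) + (θ (n + 1) : ℂ)) - l) * ∏ i ∈ Finset.Icc 2 (n - 1), ((θ i : ℂ) - l)

/-- Every complex root of `P_n` is real (zero imaginary part) and has positive real part. -/
theorem roots_of_Pn_real_positive (n : ℕ) (hn : 3 ≤ n) (θ : ℕ → ℝ)
    (hθ : ∀ i, 1 ≤ i → i ≤ n + 3 → 0 < θ i) :
    ∀ l : ℂ, Pfun n θ l = 0 → l.im = 0 ∧ 0 < l.re := by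
  intro l hl
  unfold Pfun at hl
  rcases mul_eq_zero.mp hl with h | h
  · rcases mul_eq_zero.mp h with h | h
    · -- quadratic factor
      have ha := hθ 1 le_rfl (by omega)
      have hb := hθ (n+2) (by omega) (by omega)
      have hc := hθ (n+3) (by omega) (by omega)
      set a := θ 1 with ha'
      set b := θ (n+2) with hb'
      set c := θ (n+3) with hc'
      have h1 := congrArg Complex.re h
      have h2 := congrArg Complex.im h
      simp [Complex.mul_re, Complex.mul_im] at h1 h2
      set x := l.re
      set y := l.im
      have hy : y = 0 := by
        by_contra hy
        have h2' : a + b + c - 2*x = 0 := by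
          rcases mul_eq_zero.mp (show y * (a + b + c - 2*x) = 0 by nlinarith [h2]) with h' | h'
          · exact absurd h' hy
          · exact h'
        nlinarith [sq_nonneg (a - b - c), sq_nonneg y, mul_pos ha hb, mul_pos ha hc]
      refine ⟨hy, ?_⟩
      rw [hy] at h1
      by_contra hx
      push_neg at hx
      nlinarith [mul_pos ha hc, sq_nonneg x, mul_nonneg (le_of_lt ha) (neg_nonneg.mpr hx),
        mul_nonneg (le_of_lt hb) (neg_nonneg.mpr hx), mul_nonneg (le_of_lt hc) (neg_nonneg.mpr hx)]
    · -- linear factor θ n + θ (n+1) - l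
      have hl' : l = ((θ n + θ (n+1) : ℝ) : ℂ) := by
        have := sub_eq_zero.mp h
        push_cast
        exact this.symm
      have h1 := hθ n (by omega) (by omega)
      have h2 := hθ (n+1) (by omega) (by omega)
      rw [hl']
      constructor
      · simp
      · simp
        linarith
  · -- product factor
    obtain ⟨i, hi, hzi⟩ := Finset.prod_eq_zero_iff.mp h
    simp [Finset.mem_Icc] at hi
    have hpos := hθ i (by omega) (by omega)
    have hl' : l = ((θ i : ℝ) : ℂ) := (sub_eq_zero.mp hzi).symm
    rw [hl']
    exact ⟨by simp, by simpa using hpos⟩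
end

section
/- Cycle stability conjecture (polynomial form): every complex root λ of χ_n = P_n + Q₁ satisfies Re(λ) > 0; in particular χ_n has no roots in the closed left half of the complex plane. -/
open Complex Finset

/-- The polynomial `Q₁(λ) = −(θ_{n+3} − λ) ∏_{i=1}^{n} θ_i`. -/
noncomputable def Qfun (n : ℕ) (θ : ℕ → ℝ) (l : ℂ) : ℂ :=
  -((θ (n + 3) : ℂ) - l) * ∏ i ∈ Finset.Icc 1 n, (θ i : ℂ)

theorem Finset.prod_Icc_one_eq_mul_prod_mul {M : Type*} [CommMonoid M] (f : ℕ → M) {n : ℕ}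
    (hn : 2 ≤ n) : ∏ i ∈ Icc 1 n, f i = f 1 * (∏ i ∈ Icc 2 (n - 1), f i) * f n := by
  obtain ⟨m, rfl⟩ : ∃ m, n = m + 1 := ⟨n - 1, by omega⟩
  rw [prod_Icc_succ_top (by omega), ← insert_Icc_add_one_left_eq_Icc (by omega),
    prod_insert (by simp), Nat.add_sub_cancel, one_add_one_eq_two]

section LeftHalfPlane

variable {l : ℂ}

theorem Complex.le_norm_ofReal_sub (hl : l.re ≤ 0) (t : ℝ) : t ≤ ‖(t : ℂ) - l‖ :=
  calc t ≤ ((t : ℂ) - l).re := by simp only [sub_re, ofReal_re]; linarith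
    _ ≤ ‖(t : ℂ) - l‖ := re_le_norm _

theorem Complex.norm_ofReal_sub_pos (hl : l.re ≤ 0) {t : ℝ} (ht : 0 < t) : 0 < ‖(t : ℂ) - l‖ :=
  ht.trans_le (le_norm_ofReal_sub hl t)

theorem Complex.re_neg_div_ofReal_sub_nonneg (hl : l.re ≤ 0) {c : ℝ} (hc : 0 ≤ c) :
    0 ≤ (-l / (c - l)).re := by
  rw [div_re]
  have hre : 0 ≤ (-l).re * ((c : ℂ) - l).re := by
    simp only [neg_re, sub_re, ofReal_re]; nlinarith
  have him : 0 ≤ (-l).im * ((c : ℂ) - l).im := by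
    simp only [neg_im, sub_im, ofReal_im]; nlinarith [sq_nonneg l.im]
  have hn := normSq_nonneg ((c : ℂ) - l)
  positivity

theorem Complex.mul_norm_ofReal_sub_le_norm_quadratic (hl : l.re ≤ 0) {a b c : ℝ} (hb : 0 ≤ b)
    (hc : 0 ≤ c) :
    a * ‖(c : ℂ) - l‖ ≤ ‖((a : ℂ) - l) * (((b : ℂ) + c) - l) - a * b‖ := by
  rcases eq_or_ne ((c : ℂ) - l) 0 with hD | hD
  · simp [hD]
  have hfactor : ((a : ℂ) - l) * (((b : ℂ) + c) - l) - a * b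
      = ((a : ℂ) - l + b * (-l / (c - l))) * (c - l) := by
    field_simp; ring
  have hre : a ≤ ((a : ℂ) - l + b * (-l / (c - l))).re := by
    have := mul_nonneg hb (re_neg_div_ofReal_sub_nonneg hl hc)
    simp only [add_re, sub_re, ofReal_re, re_ofReal_mul]
    linarith
  rw [hfactor, norm_mul]
  exact mul_le_mul_of_nonneg_right (hre.trans (re_le_norm _)) (norm_nonneg _)

theorem Finset.prod_le_prod_norm_ofReal_sub (hl : l.re ≤ 0) {s : Finset ℕ} {θ : ℕ → ℝ}
    (hθ : ∀ i ∈ s, 0 ≤ θ i) : ∏ i ∈ s, θ i ≤ ∏ i ∈ s, ‖(θ i : ℂ) - l‖ :=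
  prod_le_prod hθ fun i _ ↦ le_norm_ofReal_sub hl (θ i)

end LeftHalfPlane

section Cycle

variable {n : ℕ} {θ : ℕ → ℝ} {l : ℂ}

theorem le_norm_Pfun (hn : 1 ≤ n) (hθ : ∀ i, 1 ≤ i → i ≤ n + 3 → 0 ≤ θ i) (hl : l.re ≤ 0) :
    θ 1 * ‖(θ (n + 3) : ℂ) - l‖ * (θ n + θ (n + 1)) * ∏ i ∈ Icc 2 (n - 1), θ i
      ≤ ‖Pfun n θ l‖ := by
  have hmid : ∀ i ∈ Icc 2 (n - 1), 0 ≤ θ i := fun i hi ↦ by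
    rw [mem_Icc] at hi; exact hθ i (by omega) (by omega)
  have hθn : 0 ≤ θ n + θ (n + 1) :=
    add_nonneg (hθ n hn (by omega)) (hθ (n + 1) (by omega) (by omega))
  have hquad := mul_norm_ofReal_sub_le_norm_quadratic hl (a := θ 1)
    (hθ (n + 2) (by omega) (by omega)) (hθ (n + 3) (by omega) le_rfl)
  have hlin : θ n + θ (n + 1) ≤ ‖(θ n : ℂ) + θ (n + 1) - l‖ := by
    exact_mod_cast le_norm_ofReal_sub hl (θ n + θ (n + 1))
  rw [Pfun, norm_mul, norm_mul, norm_prod]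
  exact mul_le_mul (mul_le_mul hquad hlin hθn (norm_nonneg _))
    (prod_le_prod_norm_ofReal_sub hl hmid) (prod_nonneg hmid) (by positivity)

theorem norm_Qfun (hn : 2 ≤ n) (hθ : ∀ i, 1 ≤ i → i ≤ n → 0 ≤ θ i) :
    ‖Qfun n θ l‖ = ‖(θ (n + 3) : ℂ) - l‖ * (θ 1 * (∏ i ∈ Icc 2 (n - 1), θ i) * θ n) := by
  have hprod : 0 ≤ ∏ i ∈ Icc 1 n, θ i := prod_nonneg fun i hi ↦ by
    rw [mem_Icc] at hi; exact hθ i hi.1 hi.2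
  rw [Qfun, norm_mul, norm_neg, ← ofReal_prod, norm_real, Real.norm_of_nonneg hprod,
    prod_Icc_one_eq_mul_prod_mul _ hn]

theorem norm_Qfun_lt_norm_Pfun (hn : 2 ≤ n) (hθ : ∀ i, 1 ≤ i → i ≤ n + 3 → 0 < θ i)
    (hl : l.re ≤ 0) : ‖Qfun n θ l‖ < ‖Pfun n θ l‖ := by
  have hθ₀ : ∀ i, 1 ≤ i → i ≤ n + 3 → 0 ≤ θ i := fun i h₁ h₂ ↦ (hθ i h₁ h₂).le
  have hD := norm_ofReal_sub_pos hl (hθ (n + 3) (by omega) le_rfl)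
  have hprod : 0 < ∏ i ∈ Icc 2 (n - 1), θ i := prod_pos fun i hi ↦ by
    rw [mem_Icc] at hi; exact hθ i (by omega) (by omega)
  have hθ1 := hθ 1 le_rfl (by omega)
  have hθn1 := hθ (n + 1) (by omega) (by omega)
  rw [norm_Qfun hn fun i h₁ h₂ ↦ hθ₀ i h₁ (by omega)]
  refine lt_of_lt_of_le ?_ (le_norm_Pfun (by omega) hθ₀ hl)
  nlinarith [mul_pos (mul_pos (mul_pos hθ1 hD) hθn1) hprod]

end Cycle

/-- Cycle stability conjecture, polynomial form: every complex root of
`χ_n = P_n + Q₁` has strictly positive real part; in particular `χ_n` has no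
roots in the closed left half-plane. -/
theorem cycle_stability_polynomial_form (n : ℕ) (hn : 3 ≤ n) (θ : ℕ → ℝ)
    (hθ : ∀ i, 1 ≤ i → i ≤ n + 3 → 0 < θ i) :
    ∀ l : ℂ, Pfun n θ l + Qfun n θ l = 0 → 0 < l.re := by
  intro l hl
  by_contra! hre
  have hnorm : ‖Qfun n θ l‖ = ‖Pfun n θ l‖ := by rw [eq_neg_of_add_eq_zero_left hl, norm_neg]
  exact (norm_Qfun_lt_norm_Pfun (by omega) hθ hre).ne hnorm
end

section
/- Cycle stability conjecture (matrix form): every eigenvalue of the Jacobian matrix J_n has strictly negative real part; i.e., every complex root of the characteristic polynomial of J_n has negative real part. -/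
/-!
Suppose `J u = μ u` with `u ≠ 0` and `Re μ ≥ 0`. Rows `2, …, n - 1` of `J` read
`(μ + t) u_k = s u_{k-1}` with `s, t > 0`, and `|μ + t| ≥ t` turns each of them into
`t |u_k| ≤ s |u_{k-1}|`. Eliminating the cofactor component `u_n` from rows `0` and `1` gives two
relations of the same kind, the one from row `0` with coefficient
`(μ + θ₁)(μ + θ_{n+3}) + θ_{n+2} μ`, whose modulus is at least `θ₁ |μ + θ_{n+3}|`. Going once
around the cycle then gives `(θ_n + θ_{n+1}) |u_0| ≤ θ_n |u_0|`, so `u_0 = 0`, and the same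
inequalities force every other component to vanish.
-/
open Complex Matrix

/-- The Jacobian `J_n` of the non-autocatalytic metabolic cycle with `n` metabolites
and one cofactor pair, obtained by structural kinetic modeling.  Rows and columns are
indexed by `Fin (n+1)` (so index `k : Fin (n+1)` corresponds to index `k+1` in the
1-indexed description). -/
def Jmat (n : ℕ) (θ : ℕ → ℝ) : Matrix (Fin (n + 1)) (Fin (n + 1)) ℝ :=
  Matrix.of fun i j =>
    if i.val = 0 then
      (if j.val = 0 then -θ 1
       else if j.val = n - 1 then θ n
       else if j.val = n then -θ (n + 2) else 0)
    else if i.val = n then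
      (if j.val = 0 then -θ 1
       else if j.val = n then -(θ (n + 2) + θ (n + 3)) else 0)
    else
      if j.val = i.val - 1 then θ i.val
      else if j.val = i.val then
        (if i.val = n - 1 then -(θ n + θ (n + 1)) else -θ (i.val + 1))
      else if i.val = 1 ∧ j.val = n then θ (n + 2) else 0

theorem Fintype.sum_eq_add_add {α M : Type*} [Fintype α] [DecidableEq α] [AddCommMonoid M]
    {f : α → M} (a b c : α) (hab : a ≠ b) (hac : a ≠ c) (hbc : b ≠ c)
    (h : ∀ x, x ≠ a ∧ x ≠ b ∧ x ≠ c → f x = 0) : ∑ x, f x = f a + f b + f c := by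
  rw [← Finset.sum_subset (Finset.subset_univ {a, b, c}) (fun x _ hx => h x (by simpa using hx)),
    Finset.sum_insert (by simp [hab, hac]), Finset.sum_pair hbc, add_assoc]

lemma Matrix.exists_mulVec_eq_smul_of_isRoot_charpoly {ι K : Type*} [Fintype ι] [DecidableEq ι]
    [Field K] {A : Matrix ι ι K} {μ : K} (h : A.charpoly.IsRoot μ) :
    ∃ v ≠ 0, A.mulVec v = μ • v := by
  rw [← Matrix.charpoly_toLin', ← Module.End.hasEigenvalue_iff_isRoot_charpoly] at h
  obtain ⟨v, hv⟩ := h.exists_hasEigenvector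
  exact ⟨v, hv.2, by simpa using hv.apply_eq_smul⟩

lemma eq_zero_of_mul_norm_nonpos {E : Type*} [NormedAddCommGroup E] {t : ℝ} {x : E}
    (ht : 0 < t) (h : t * ‖x‖ ≤ 0) : x = 0 :=
  norm_le_zero_iff.1 (nonpos_of_mul_nonpos_right h ht)

namespace Complex

open ComplexConjugate

variable {μ : ℂ}

lemma le_norm_add_ofReal (hμ : 0 ≤ μ.re) (t : ℝ) : t ≤ ‖μ + t‖ :=
  calc t ≤ (μ + t).re := by simpa using hμ
    _ ≤ ‖μ + t‖ := re_le_norm _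

lemma mul_norm_le_of_add_ofReal_mul_eq (hμ : 0 ≤ μ.re) {t s : ℝ} (hs : 0 ≤ s)
    {x y : ℂ} (h : (μ + t) * x = s * y) : t * ‖x‖ ≤ s * ‖y‖ :=
  calc t * ‖x‖ ≤ ‖μ + t‖ * ‖x‖ := by gcongr; exact le_norm_add_ofReal hμ t
    _ = s * ‖y‖ := by rw [← norm_mul, h, norm_mul, norm_real, Real.norm_of_nonneg hs]

lemma mul_norm_add_le_norm (hμ : 0 ≤ μ.re) {a c d : ℝ} (hc : 0 ≤ c) (hd : 0 ≤ d) :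
    a * ‖μ + d‖ ≤ ‖(μ + a) * (μ + d) + c * μ‖ := by
  set w : ℂ := μ + d
  set E : ℂ := (μ + a) * w + c * μ
  have hre : (E * conj w).re = (μ.re + a) * normSq w + c * (normSq μ + d * μ.re) := by
    simp only [E, w, mul_re, mul_im, add_re, add_im, ofReal_re, ofReal_im, conj_re, conj_im,
      normSq_apply]
    ring
  have hsq : a * (‖w‖ * ‖w‖) ≤ ‖E‖ * ‖w‖ :=
    calc a * (‖w‖ * ‖w‖) = a * normSq w := by rw [norm_mul_self_eq_normSq]
      _ ≤ (E * conj w).re := by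
        rw [hre]
        nlinarith [mul_nonneg hμ (normSq_nonneg w),
          mul_nonneg hc (add_nonneg (normSq_nonneg μ) (mul_nonneg hd hμ))]
      _ ≤ ‖E * conj w‖ := re_le_norm _
      _ = ‖E‖ * ‖w‖ := by rw [norm_mul, norm_conj]
  rcases (norm_nonneg w).eq_or_lt with hw | hw
  · rw [← hw, mul_zero]; positivity
  · nlinarith

end Complex

open Fin.NatCast

structure JmatEigenEquations (n : ℕ) (θ : ℕ → ℝ) (μ : ℂ) (u : ℕ → ℂ) : Prop where
  row_zero : μ * u 0 = -θ 1 * u 0 + θ n * u (n - 1) - θ (n + 2) * u n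
  row_one : μ * u 1 = θ 1 * u 0 - θ 2 * u 1 + θ (n + 2) * u n
  row_mid : ∀ k, 1 ≤ k → k ≤ n - 3 →
    μ * u (k + 1) = θ (k + 1) * u k - θ (k + 2) * u (k + 1)
  row_penultimate : μ * u (n - 1) = θ (n - 1) * u (n - 2) - (θ n + θ (n + 1)) * u (n - 1)
  row_last : μ * u n = -θ 1 * u 0 - (θ (n + 2) + θ (n + 3)) * u n

namespace JmatEigenEquations

variable {n : ℕ} {θ : ℕ → ℝ} {μ : ℂ} {u : ℕ → ℂ}

lemma of_mulVec_eq (hn : 3 ≤ n) {v : Fin (n + 1) → ℂ}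
    (hv : ((Jmat n θ).map ((↑) : ℝ → ℂ)).mulVec v = μ • v) :
    JmatEigenEquations n θ μ (fun k => v k) := by
  have row (i : ℕ) : μ * v i = ∑ j, (Jmat n θ i j : ℂ) * v j := by
    simpa [Matrix.mulVec, dotProduct] using (congrFun hv i).symm
  clear hv
  constructor
  case' row_zero => rw [row, Fintype.sum_eq_add_add ((0 : ℕ) : Fin (n + 1)) ↑(n - 1) ↑n]
  case' row_one =>
    rw [row, Fintype.sum_eq_add_add ((0 : ℕ) : Fin (n + 1)) ((1 : ℕ) : Fin (n + 1)) ↑n]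
  case' row_mid => intro k hk₁ hk; rw [row, Fintype.sum_eq_add ↑k ↑(k + 1)]
  case' row_penultimate => rw [row, Fintype.sum_eq_add ↑(n - 2) ↑(n - 1)]
  case' row_last => rw [row, Fintype.sum_eq_add ((0 : ℕ) : Fin (n + 1)) ↑n]
  all_goals clear row; try intro x hx
  all_goals try simp (disch := omega) only [ne_eq, Fin.ext_iff, Fin.val_cast_of_lt] at hx
  all_goals simp (disch := omega) only [ne_eq, Fin.ext_iff, Fin.val_cast_of_lt,
    Jmat, of_apply, if_pos, if_neg, ↓reduceIte, and_self]
  all_goals first | omega | (push_cast; ring1)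

lemma mul_norm_le_mul_norm_one (hu : JmatEigenEquations n θ μ u) (hμ : 0 ≤ μ.re)
    (hθ : ∀ i, 1 ≤ i → i ≤ n + 3 → 0 < θ i) :
    ∀ k, 1 ≤ k → k ≤ n - 2 → θ (k + 1) * ‖u k‖ ≤ θ 2 * ‖u 1‖ := by
  intro k hk₁
  induction k, hk₁ using Nat.le_induction with
  | base => intro _; exact le_rfl
  | succ k hk ih =>
    intro hkn
    have hrow : (μ + θ (k + 2)) * u (k + 1) = θ (k + 1) * u k := by
      linear_combination hu.row_mid k hk (by omega)
    calc θ (k + 1 + 1) * ‖u (k + 1)‖ ≤ θ (k + 1) * ‖u k‖ :=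
          mul_norm_le_of_add_ofReal_mul_eq hμ (hθ _ (by omega) (by omega)).le hrow
      _ ≤ θ 2 * ‖u 1‖ := ih (by omega)

lemma mul_norm_penultimate_le (hu : JmatEigenEquations n θ μ u) (hn : 3 ≤ n)
    (hμ : 0 ≤ μ.re) (hθ : ∀ i, 1 ≤ i → i ≤ n + 3 → 0 < θ i) :
    (θ n + θ (n + 1)) * ‖u (n - 1)‖ ≤ θ 2 * ‖u 1‖ := by
  have hrow : (μ + ↑(θ n + θ (n + 1))) * u (n - 1) = θ (n - 1) * u (n - 2) := by
    push_cast; linear_combination hu.row_penultimate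
  calc (θ n + θ (n + 1)) * ‖u (n - 1)‖ ≤ θ (n - 1) * ‖u (n - 2)‖ :=
        mul_norm_le_of_add_ofReal_mul_eq hμ (hθ _ (by omega) (by omega)).le hrow
    _ = θ (n - 2 + 1) * ‖u (n - 2)‖ := by rw [show n - 2 + 1 = n - 1 by omega]
    _ ≤ θ 2 * ‖u 1‖ := hu.mul_norm_le_mul_norm_one hμ hθ _ (by omega) le_rfl

lemma mul_norm_one_le (hu : JmatEigenEquations n θ μ u) (hμ : 0 ≤ μ.re) (hθ₁ : 0 ≤ θ 1) :
    θ 2 * (‖μ + ↑(θ (n + 2) + θ (n + 3))‖ * ‖u 1‖) ≤ θ 1 * (‖μ + θ (n + 3)‖ * ‖u 0‖) := by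
  have h : (μ + θ 2) * ((μ + ↑(θ (n + 2) + θ (n + 3))) * u 1)
      = θ 1 * ((μ + θ (n + 3)) * u 0) := by
    push_cast
    linear_combination (μ + θ (n + 2) + θ (n + 3)) * hu.row_one + θ (n + 2) * hu.row_last
  simpa only [norm_mul] using mul_norm_le_of_add_ofReal_mul_eq hμ hθ₁ h

lemma mul_norm_last_le (hu : JmatEigenEquations n θ μ u) (hμ : 0 ≤ μ.re) (hθ₁ : 0 ≤ θ 1) :
    (θ (n + 2) + θ (n + 3)) * ‖u n‖ ≤ θ 1 * ‖u 0‖ := by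
  have h : (μ + ↑(θ (n + 2) + θ (n + 3))) * u n = θ 1 * (-u 0) := by
    push_cast; linear_combination hu.row_last
  simpa only [norm_neg] using mul_norm_le_of_add_ofReal_mul_eq hμ hθ₁ h

lemma norm_mul_norm_zero_eq (hu : JmatEigenEquations n θ μ u) (hθn : 0 ≤ θ n) :
    ‖(μ + θ 1) * (μ + θ (n + 3)) + θ (n + 2) * μ‖ * ‖u 0‖
      = θ n * (‖μ + ↑(θ (n + 2) + θ (n + 3))‖ * ‖u (n - 1)‖) := by
  have h : ((μ + θ 1) * (μ + θ (n + 3)) + θ (n + 2) * μ) * u 0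
      = θ n * ((μ + ↑(θ (n + 2) + θ (n + 3))) * u (n - 1)) := by
    push_cast
    linear_combination (μ + θ (n + 2) + θ (n + 3)) * hu.row_zero - θ (n + 2) * hu.row_last
  rw [← norm_mul, h, norm_mul, norm_mul, norm_real, Real.norm_of_nonneg hθn]

lemma apply_zero_eq_zero (hu : JmatEigenEquations n θ μ u) (hn : 3 ≤ n) (hμ : 0 ≤ μ.re)
    (hθ : ∀ i, 1 ≤ i → i ≤ n + 3 → 0 < θ i) : u 0 = 0 := by
  have hθ₁ := hθ 1 le_rfl (by omega)
  have hθn := hθ n (by omega) (by omega)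
  have hθn₁ := hθ (n + 1) (by omega) (by omega)
  set A := ‖μ + ↑(θ (n + 2) + θ (n + 3))‖
  set D := ‖μ + θ (n + 3)‖
  have hD : 0 < D := (hθ (n + 3) (by omega) le_rfl).trans_le (le_norm_add_ofReal hμ _)
  have key : (θ n + θ (n + 1)) * (θ 1 * D * ‖u 0‖) ≤ θ n * (θ 1 * D * ‖u 0‖) :=
    calc (θ n + θ (n + 1)) * (θ 1 * D * ‖u 0‖)
        ≤ (θ n + θ (n + 1)) * (‖(μ + θ 1) * (μ + θ (n + 3)) + θ (n + 2) * μ‖ * ‖u 0‖) := by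
          gcongr
          exact mul_norm_add_le_norm hμ (hθ _ (by omega) (by omega)).le
            (hθ _ (by omega) le_rfl).le
      _ = θ n * A * ((θ n + θ (n + 1)) * ‖u (n - 1)‖) := by
          rw [hu.norm_mul_norm_zero_eq hθn.le]; ring
      _ ≤ θ n * A * (θ 2 * ‖u 1‖) := by
          gcongr θ n * A * ?_; exact hu.mul_norm_penultimate_le hn hμ hθ
      _ = θ n * (θ 2 * (A * ‖u 1‖)) := by ring
      _ ≤ θ n * (θ 1 * (D * ‖u 0‖)) := by
          gcongr θ n * ?_; exact hu.mul_norm_one_le hμ hθ₁.le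
      _ = θ n * (θ 1 * D * ‖u 0‖) := by ring
  have hpos : 0 < θ (n + 1) * θ 1 * D := by positivity
  exact eq_zero_of_mul_norm_nonpos hpos (by linarith)

lemma apply_eq_zero (hu : JmatEigenEquations n θ μ u) (hn : 3 ≤ n) (hμ : 0 ≤ μ.re)
    (hθ : ∀ i, 1 ≤ i → i ≤ n + 3 → 0 < θ i) {k : ℕ} (hk : k ≤ n) : u k = 0 := by
  have hθ₁ := hθ 1 le_rfl (by omega)
  have hcd : 0 < θ (n + 2) + θ (n + 3) :=
    add_pos (hθ _ (by omega) (by omega)) (hθ _ (by omega) le_rfl)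
  have h₀ := hu.apply_zero_eq_zero hn hμ hθ
  have h₁ : u 1 = 0 := by
    have h := hu.mul_norm_one_le hμ hθ₁.le
    rw [h₀, norm_zero, mul_zero, mul_zero, ← mul_assoc] at h
    have hA := hcd.trans_le (le_norm_add_ofReal hμ _)
    exact eq_zero_of_mul_norm_nonpos (mul_pos (hθ 2 (by omega) (by omega)) hA) h
  obtain rfl | hk₀ := Nat.eq_zero_or_pos k
  · exact h₀
  obtain rfl | hkn := hk.eq_or_lt
  · have h := hu.mul_norm_last_le hμ hθ₁.le
    rw [h₀, norm_zero, mul_zero] at h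
    exact eq_zero_of_mul_norm_nonpos hcd h
  obtain rfl | hkn := (Nat.le_sub_one_of_lt hkn).eq_or_lt
  · have h := hu.mul_norm_penultimate_le hn hμ hθ
    rw [h₁, norm_zero, mul_zero] at h
    exact eq_zero_of_mul_norm_nonpos
      (add_pos (hθ _ (by omega) (by omega)) (hθ _ (by omega) (by omega))) h
  · have h := hu.mul_norm_le_mul_norm_one hμ hθ k hk₀ (by omega)
    rw [h₁, norm_zero, mul_zero] at h
    exact eq_zero_of_mul_norm_nonpos (hθ _ (by omega) (by omega)) h

end JmatEigenEquations

/-- Cycle stability conjecture, matrix form: every eigenvalue of the Jacobian `J_n`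
(i.e. every complex root of its characteristic polynomial) has strictly negative
real part. -/
theorem cycle_stability_matrix_form (n : ℕ) (hn : 3 ≤ n) (θ : ℕ → ℝ)
    (hθ : ∀ i, 1 ≤ i → i ≤ n + 3 → 0 < θ i) :
    ∀ μ : ℂ, (((Jmat n θ).map (fun x : ℝ => (x : ℂ))).charpoly).IsRoot μ → μ.re < 0 := by
  intro μ hμ
  by_contra! hre
  obtain ⟨v, hv₀, hv⟩ := Matrix.exists_mulVec_eq_smul_of_isRoot_charpoly hμ
  have hu := JmatEigenEquations.of_mulVec_eq hn hv
  exact hv₀ (funext fun j => by simpa using hu.apply_eq_zero hn hre hθ j.is_le)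
end

section
/- The modulus of P_n strictly dominates that of Q₁ on the entire imaginary axis: for every real y, |P_n(iy)| > |Q₁(iy)|. -/
open Complex Finset

/-!
On the imaginary axis `λ = iy` every factor `θ - λ` of `P_n` has modulus at least `θ`, and the
quadratic factor has modulus at least `θ₁ |θ_{n+3} - λ|`. Bounding the factors of `P_n` below
this way gives `|P_n(iy)| ≥ θ₁ |θ_{n+3} - iy| (θ_n + θ_{n+1}) ∏_{i=2}^{n-1} θ_i`, which exceeds
`|Q₁(iy)| = θ₁ |θ_{n+3} - iy| θ_n ∏_{i=2}^{n-1} θ_i` by the term carrying `θ_{n+1} > 0`.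
-/

lemma le_norm_ofReal_sub_mul_I (a y : ℝ) : a ≤ ‖(a : ℂ) - y * I‖ :=
  (le_abs_self a).trans (by simpa using abs_re_le_norm ((a : ℂ) - y * I))

lemma prod_le_norm_prod_ofReal_sub_mul_I {ι : Type*} (s : Finset ι) (f : ι → ℝ)
    (hf : ∀ i ∈ s, 0 ≤ f i) (y : ℝ) : ∏ i ∈ s, f i ≤ ‖∏ i ∈ s, ((f i : ℂ) - y * I)‖ := by
  rw [norm_prod]
  exact prod_le_prod hf fun i _ ↦ le_norm_ofReal_sub_mul_I (f i) y

/-- At `λ = iy` the quadratic `(a - λ)(b + c - λ) - ab` equals `ac - y² - iy(a + b + c)`, whose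
squared modulus exceeds `a² (c² + y²)` by `y⁴ + y² (b² + c² + 2b(a + c))`. -/
lemma mul_norm_le_norm_quadratic_mul_I (a b c y : ℝ) (hb : 0 ≤ b) (hac : 0 ≤ a + c) :
    a * ‖(c : ℂ) - y * I‖ ≤ ‖((a : ℂ) - y * I) * ((b : ℂ) + c - y * I) - a * b‖ := by
  have hsq : (a * ‖(c : ℂ) - y * I‖) ^ 2 ≤
      ‖((a : ℂ) - y * I) * ((b : ℂ) + c - y * I) - a * b‖ ^ 2 := by
    simp only [mul_pow, Complex.sq_norm, normSq_apply, sub_re, sub_im, mul_re, mul_im, add_re,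
      add_im, ofReal_re, ofReal_im, I_re, I_im]
    nlinarith [sq_nonneg y, mul_nonneg (mul_nonneg hb hac) (sq_nonneg y), sq_nonneg (y ^ 2),
      sq_nonneg b, sq_nonneg c]
  exact (le_abs_self _).trans (abs_le_of_sq_le_sq hsq (norm_nonneg _))

lemma prod_Icc_one_eq_mul_mul_prod_Icc_two {M : Type*} [CommMonoid M] {n : ℕ} (hn : 2 ≤ n)
    (f : ℕ → M) : ∏ i ∈ Icc 1 n, f i = f 1 * f n * ∏ i ∈ Icc 2 (n - 1), f i := by
  have hIcc : Icc 1 n = insert 1 (insert n (Icc 2 (n - 1))) := by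
    ext i; simp only [mem_Icc, mem_insert]; omega
  rw [hIcc, prod_insert (by simp only [mem_insert, mem_Icc]; omega),
    prod_insert (by simp only [mem_Icc]; omega), mul_assoc]

lemma norm_Qfun_mul_I {n : ℕ} (hn : 2 ≤ n) {θ : ℕ → ℝ} (hθ : ∀ i, 1 ≤ i → i ≤ n + 3 → 0 < θ i)
    (y : ℝ) :
    ‖Qfun n θ (y * I)‖ = θ 1 * ‖(θ (n + 3) : ℂ) - y * I‖ * θ n * ∏ i ∈ Icc 2 (n - 1), θ i := by
  have hnonneg : 0 ≤ ∏ i ∈ Icc 1 n, θ i :=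
    prod_nonneg fun i hi ↦ have := mem_Icc.1 hi; (hθ i (by omega) (by omega)).le
  rw [Qfun, norm_mul, norm_neg, ← ofReal_prod, norm_real, Real.norm_of_nonneg hnonneg,
    prod_Icc_one_eq_mul_mul_prod_Icc_two hn]
  ring

lemma le_norm_Pfun_mul_I {n : ℕ} (hn : 1 ≤ n) {θ : ℕ → ℝ}
    (hθ : ∀ i, 1 ≤ i → i ≤ n + 3 → 0 < θ i) (y : ℝ) :
    θ 1 * ‖(θ (n + 3) : ℂ) - y * I‖ * (θ n + θ (n + 1)) * ∏ i ∈ Icc 2 (n - 1), θ i ≤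
      ‖Pfun n θ (y * I)‖ := by
  have hquad := mul_norm_le_norm_quadratic_mul_I (θ 1) (θ (n + 2)) (θ (n + 3)) y
    (hθ _ (by omega) (by omega)).le (add_pos (hθ 1 le_rfl (by omega)) (hθ _ (by omega) le_rfl)).le
  have hlin := le_norm_ofReal_sub_mul_I (θ n + θ (n + 1)) y
  have hmid : ∀ i ∈ Icc 2 (n - 1), 0 ≤ θ i := fun i hi ↦
    have := mem_Icc.1 hi; (hθ i (by omega) (by omega)).le
  have hprod := prod_le_norm_prod_ofReal_sub_mul_I (Icc 2 (n - 1)) θ hmid y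
  have hsum : 0 ≤ θ n + θ (n + 1) := (add_pos (hθ n hn (by omega)) (hθ _ (by omega) (by omega))).le
  rw [Pfun, norm_mul, norm_mul]
  push_cast at hlin
  gcongr
  exact prod_nonneg hmid

/-- The modulus of `P_n` strictly dominates that of `Q₁` on the whole imaginary axis:
for every real `y`, `|P_n(iy)| > |Q₁(iy)|`. -/
theorem abs_Pn_gt_abs_Q1_on_imaginary_axis (n : ℕ) (hn : 3 ≤ n) (θ : ℕ → ℝ)
    (hθ : ∀ i, 1 ≤ i → i ≤ n + 3 → 0 < θ i) :
    ∀ y : ℝ, ‖Qfun n θ (y * Complex.I)‖ < ‖Pfun n θ (y * Complex.I)‖ := by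
  intro y
  have hθ1 := hθ 1 le_rfl (by omega)
  have hθn1 := hθ (n + 1) (by omega) (by omega)
  have hθ3 : 0 < ‖(θ (n + 3) : ℂ) - y * I‖ :=
    (hθ (n + 3) (by omega) le_rfl).trans_le (le_norm_ofReal_sub_mul_I _ y)
  have hC : 0 < ∏ i ∈ Icc 2 (n - 1), θ i :=
    prod_pos fun i hi ↦ have := mem_Icc.1 hi; hθ i (by omega) (by omega)
  rw [norm_Qfun_mul_I (by omega) hθ]
  refine lt_of_lt_of_le ?_ (le_norm_Pfun_mul_I (by omega) hθ y)
  gcongr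
  linarith
end

section
/- Monotonicity of the modulus ratio along the imaginary axis: let r₁, ..., r_{n+1} and r_q be positive real numbers such that r_q is strictly greater than at least one of the r_i. Then the function x²(y) = ∏_{i=1}^{n+1} (r_i² + y²) / (r_q² + y²) is strictly increasing for y > 0 (its derivative with respect to y is strictly positive for all y > 0). -/
open Finset

/-- Monotonicity of the squared modulus ratio along the imaginary axis: if
`r₁, …, r_{n+1}` and `r_q` are positive reals and `r_q` is strictly greater than at
least one of the `rᵢ`, then `x²(y) = ∏_{i=1}^{n+1} (rᵢ² + y²) / (r_q² + y²)` is
strictly increasing for `y > 0`. -/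
theorem modulus_ratio_strictMono (n : ℕ) (hn : 1 ≤ n) (r : Fin (n + 1) → ℝ) (rq : ℝ)
    (hr : ∀ i, 0 < r i) (hrq : 0 < rq) (hlt : ∃ i, r i < rq) :
    StrictMonoOn (fun y : ℝ => (∏ i, (r i ^ 2 + y ^ 2)) / (rq ^ 2 + y ^ 2))
      (Set.Ioi (0 : ℝ)) := by
  intro a ha b hb hab
  simp only [Set.mem_Ioi] at ha hb
  have hda : (0:ℝ) < rq ^ 2 + a ^ 2 := by positivity
  have hdb : (0:ℝ) < rq ^ 2 + b ^ 2 := by positivity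
  simp only
  rw [div_lt_div_iff₀ hda hdb]
  obtain ⟨i₀, hi₀⟩ := hlt
  rw [← Finset.mul_prod_erase univ (fun i => r i ^ 2 + a ^ 2) (mem_univ i₀),
    ← Finset.mul_prod_erase univ (fun i => r i ^ 2 + b ^ 2) (mem_univ i₀)]
  set Pa := ∏ i ∈ univ.erase i₀, (r i ^ 2 + a ^ 2) with hPa
  set Pb := ∏ i ∈ univ.erase i₀, (r i ^ 2 + b ^ 2) with hPb
  have hPapos : 0 < Pa := Finset.prod_pos fun i _ => by positivity
  have hPle : Pa ≤ Pb := by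
    apply Finset.prod_le_prod (fun i _ => by positivity)
    intro i _
    nlinarith
  have h1 : r i₀ ^ 2 < rq ^ 2 := by nlinarith [hr i₀]
  have h2 : a ^ 2 < b ^ 2 := by nlinarith
  have hA : (r i₀ ^ 2 + a ^ 2) * (rq ^ 2 + b ^ 2) <
      (r i₀ ^ 2 + b ^ 2) * (rq ^ 2 + a ^ 2) := by
    nlinarith [mul_pos (sub_pos.2 h1) (sub_pos.2 h2)]
  have hBpos : (0:ℝ) < (r i₀ ^ 2 + b ^ 2) * (rq ^ 2 + a ^ 2) := by positivity
  have key : ((r i₀ ^ 2 + a ^ 2) * (rq ^ 2 + b ^ 2)) * Pa <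
      ((r i₀ ^ 2 + b ^ 2) * (rq ^ 2 + a ^ 2)) * Pb :=
    mul_lt_mul hA hPle hPapos hBpos.le
  calc (r i₀ ^ 2 + a ^ 2) * Pa * (rq ^ 2 + b ^ 2)
      = ((r i₀ ^ 2 + a ^ 2) * (rq ^ 2 + b ^ 2)) * Pa := by ring
    _ < ((r i₀ ^ 2 + b ^ 2) * (rq ^ 2 + a ^ 2)) * Pb := key
    _ = (r i₀ ^ 2 + b ^ 2) * Pb * (rq ^ 2 + a ^ 2) := by ring
end

section
/- Stubborn Real Roots Theorem: let P and Q be real polynomials of degrees n and m respectively with n > m, both splitting over ℝ (all roots purely real), and suppose |P(0)| > |Q(0)|. Let |p₁| ≤ |p₂| ≤ ... ≤ |p_n| and |q₁| ≤ ... ≤ |q_m| be the roots of P and Q (with multiplicity) ordered by absolute value, and suppose |p_j| < |q_j| for every j = 1, ..., m. Then the number of roots (with multiplicity) of S = P + Q with strictly negative real part equals the number of roots of P with strictly negative real part, and likewise the number of roots of S with strictly positive real part equals the number of roots of P with strictly positive real part. -/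
/-!
On the imaginary axis a real-rooted polynomial satisfies `|P(iy)|² = lc(P)² ∏ (y² + pᵢ²)`.
Pairing `pⱼ` with `qⱼ`, the ratio `|Q(iy)|² / |P(iy)|²` is a nonincreasing function of `y²`,
so `|Q(0)| < |P(0)|` gives `|Q| < |P|` on the whole imaginary axis. Hence no `P + tQ`,
`0 ≤ t ≤ 1`, has a root there. All these polynomials share the degree and leading coefficient
of `P`, so their roots stay bounded and move continuously with `t`, and the number of roots in
each open half-plane is the same at `t = 0` and `t = 1`.
-/

open Polynomial Filter Topology

theorem Multiset.exists_eq_map_univ_of_card_eq {α : Type*} {s : Multiset α} {n : ℕ}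
    (h : card s = n) : ∃ r : Fin n → α, s = Finset.univ.val.map r := by
  subst h
  refine ⟨fun i => s.toList.get (i.cast (by simp)), ?_⟩
  rw [Fin.univ_val_map]
  conv_lhs => rw [← s.coe_toList]
  congr 1
  exact List.ext_get (by simp) (by simp)

theorem eventually_mem_iff_of_notMem_frontier {X : Type*} [TopologicalSpace X] {s : Set X}
    {x : X} (hx : x ∉ frontier s) : ∀ᶠ y in 𝓝 x, (y ∈ s ↔ x ∈ s) := by
  by_cases h : x ∈ s
  · filter_upwards [mem_interior_iff_mem_nhds.1 ((mem_interior_iff_notMem_frontier h).2 hx)]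
      with y hy
    exact iff_of_true hy h
  · have hxc : x ∈ interior sᶜ :=
      (mem_interior_iff_notMem_frontier (s := sᶜ) h).2 (by rwa [frontier_compl])
    filter_upwards [mem_interior_iff_mem_nhds.1 hxc] with y hy
    exact iff_of_false hy h

namespace Polynomial

theorem eq_C_mul_prod_X_sub_C_of_tendsto {K ι : Type*} [Field K] [TopologicalSpace K]
    [IsTopologicalRing K] [T2Space K] [Infinite K] {n : ℕ} {l : Filter ι} [l.NeBot]
    {S : ι → K[X]} {S₀ : K[X]} {a : K} {r : ι → Fin n → K} {ρ : Fin n → K}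
    (hS : ∀ z, Tendsto (fun t => (S t).eval z) l (𝓝 (S₀.eval z)))
    (hr : Tendsto r l (𝓝 ρ)) (hfac : ∀ t, S t = C a * ∏ i, (X - C (r t i))) :
    S₀ = C a * ∏ i, (X - C (ρ i)) := by
  refine Polynomial.funext fun z => tendsto_nhds_unique (hS z) ?_
  simp only [hfac, eval_mul, eval_C, eval_prod, eval_sub, eval_X]
  exact tendsto_const_nhds.mul <| tendsto_finsetProd _ fun i _ =>
    tendsto_const_nhds.sub ((continuous_apply i).tendsto ρ |>.comp hr)

section NormedField

variable {K : Type*} [NormedField K]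

/-- Along every ultrafilter finer than `l` the bounded root vectors of `S t` converge, by
compactness, and their limit is a root vector of `S₀`. -/
theorem card_roots_filter_eventually_eq [IsAlgClosed K] [ProperSpace K] {ι : Type*}
    {l : Filter ι} {S : ι → K[X]} {S₀ : K[X]} {a : K} (ha : a ≠ 0) {n : ℕ} {R : ℝ}
    (hS : ∀ z, Tendsto (fun t => (S t).eval z) l (𝓝 (S₀.eval z)))
    (hlead : ∀ t, (S t).leadingCoeff = a) (hdeg : ∀ t, (S t).natDegree = n)
    (hbound : ∀ᶠ t in l, ∀ z ∈ (S t).roots, ‖z‖ ≤ R)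
    (pred : K → Prop) [DecidablePred pred]
    (hfront : ∀ z ∈ S₀.roots, z ∉ frontier {w | pred w}) :
    ∀ᶠ t in l, ((S t).roots.filter pred).card = (S₀.roots.filter pred).card := by
  have hmem : ∀ (v : Fin n → K) i, v i ∈ Finset.univ.val.map v :=
    fun v i => Multiset.mem_map_of_mem v (Finset.mem_univ_val i)
  choose r hr using fun t => Multiset.exists_eq_map_univ_of_card_eq
    ((IsAlgClosed.splits (S t)).natDegree_eq_card_roots.symm.trans (hdeg t))
  have hfac : ∀ t, S t = C a * ∏ i, (X - C (r t i)) := fun t => by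
    conv_lhs => rw [(IsAlgClosed.splits (S t)).eq_prod_roots, hlead, hr, Multiset.map_map]
    rfl
  rw [Filter.eventually_iff, mem_iff_ultrafilter]
  intro 𝒰 h𝒰
  have hball : ∀ᶠ t in 𝒰, r t ∈ Set.univ.pi fun _ => Metric.closedBall (0 : K) R := by
    filter_upwards [h𝒰 hbound] with t ht
    exact fun i _ => mem_closedBall_zero_iff.2 (ht _ (hr t ▸ hmem (r t) i))
  obtain ⟨ρ, -, hρ⟩ := (isCompact_univ_pi fun _ => isCompact_closedBall (0 : K) R)
    |>.ultrafilter_le_nhds (𝒰.map r) (le_principal_iff.2 hball)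
  have hroots₀ : S₀.roots = Finset.univ.val.map ρ := by
    rw [eq_C_mul_prod_X_sub_C_of_tendsto (fun z => (hS z).mono_left h𝒰) hρ hfac,
      roots_C_mul _ ha, Finset.prod_eq_multiset_prod]
    simpa only [Multiset.map_map, Function.comp_def]
      using roots_multiset_prod_X_sub_C (Finset.univ.val.map ρ)
  have hpred : ∀ i, ∀ᶠ t in 𝒰, (pred (r t i) ↔ pred (ρ i)) := fun i =>
    ((continuous_apply i).tendsto ρ |>.comp hρ).eventually
      (eventually_mem_iff_of_notMem_frontier (hfront _ (hroots₀ ▸ hmem ρ i)))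
  filter_upwards [eventually_all.2 hpred] with t ht
  rw [hr, hroots₀, Multiset.filter_map, Multiset.filter_map, Multiset.card_map,
    Multiset.card_map]
  exact congrArg _ (Multiset.filter_congr fun i _ => ht i)

variable {p q : K[X]}

theorem degree_C_mul_lt (hpq : q.degree < p.degree) (t : K) : (C t * q).degree < p.degree := by
  rw [← smul_eq_C_mul]
  exact (degree_smul_le t q).trans_lt hpq

theorem exists_norm_le_of_mem_roots_add_C_mul (hpq : q.degree < p.degree) :
    ∃ R, ∀ t : K, ‖t‖ ≤ 1 → ∀ z ∈ (p + C t * q).roots, ‖z‖ ≤ R := by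
  set B : NNReal := ((Finset.range p.natDegree).sup fun i => ‖p.coeff i‖₊ + ‖q.coeff i‖₊)
    / ‖p.leadingCoeff‖₊ + 1
  refine ⟨B, fun t ht z hz => ?_⟩
  have hcauchy : cauchyBound (p + C t * q) ≤ B := by
    rw [cauchyBound, leadingCoeff_add_of_degree_lt' (degree_C_mul_lt hpq t),
      natDegree_add_eq_left_of_degree_lt (degree_C_mul_lt hpq t)]
    unfold B
    gcongr with i
    rw [coeff_add, coeff_C_mul]
    refine (nnnorm_add_le _ _).trans ?_
    gcongr
    rw [nnnorm_mul]
    exact mul_le_of_le_one_left zero_le (by exact_mod_cast ht)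
  exact_mod_cast
    ((isRoot_of_mem_roots hz).norm_lt_cauchyBound (ne_zero_of_mem_roots hz)).le.trans hcauchy

theorem eval_add_C_mul_ne_zero {z t : K} (h : ‖q.eval z‖ < ‖p.eval z‖) (ht : ‖t‖ ≤ 1) :
    (p + C t * q).eval z ≠ 0 := by
  rw [eval_add, eval_mul, eval_C, Ne, add_eq_zero_iff_eq_neg]
  intro hp
  rw [hp, norm_neg, norm_mul] at h
  exact (mul_le_of_le_one_left (norm_nonneg _) ht).not_gt h

end NormedField

theorem card_roots_filter_add_eq_of_homotopy {p q : ℂ[X]} (hpq : q.degree < p.degree)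
    (pred : ℂ → Prop) [DecidablePred pred]
    (hfront : ∀ t ∈ Set.Icc (0 : ℝ) 1, ∀ z ∈ (p + C (t : ℂ) * q).roots,
      z ∉ frontier {w | pred w}) :
    ((p + q).roots.filter pred).card = (p.roots.filter pred).card := by
  obtain ⟨R, hR⟩ := exists_norm_le_of_mem_roots_add_C_mul hpq
  have hp : p.leadingCoeff ≠ 0 := leadingCoeff_ne_zero.2 (ne_zero_of_degree_gt hpq)
  have hcont : ContinuousOn (fun t : ℝ => ((p + C (t : ℂ) * q).roots.filter pred).card)
      (Set.Icc 0 1) := by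
    intro t₀ ht₀
    rw [ContinuousWithinAt, nhds_discrete, tendsto_pure]
    refine card_roots_filter_eventually_eq (S := fun t : ℝ => p + C (t : ℂ) * q) hp
      (fun z => ?_) (fun t => leadingCoeff_add_of_degree_lt' (degree_C_mul_lt hpq _))
      (fun t => natDegree_add_eq_left_of_degree_lt (degree_C_mul_lt hpq _))
      (eventually_nhdsWithin_of_forall fun t ht => hR t ?_) pred (hfront t₀ ht₀)
    · simp only [eval_add, eval_mul, eval_C]
      exact ((by fun_prop : Continuous fun t : ℝ => eval z p + t * eval z q).tendsto t₀)
        |>.mono_left nhdsWithin_le_nhds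
    · rw [Complex.norm_real, Real.norm_of_nonneg ht.1]
      exact ht.2
  simpa using isPreconnected_Icc.constant hcont (Set.right_mem_Icc.2 zero_le_one)
    (Set.left_mem_Icc.2 zero_le_one)

end Polynomial

theorem prod_add_mul_prod_le {R : Type*} [CommSemiring R] [PartialOrder R] [IsOrderedRing R]
    {m k : ℕ} {c : R} (hc : 0 ≤ c) {a : Fin (m + k) → R} {b : Fin m → R} (ha : ∀ i, 0 ≤ a i)
    (hab : ∀ j, a (Fin.castAdd k j) ≤ b j) :
    (∏ j, (c + b j)) * ∏ i, a i ≤ (∏ j, b j) * ∏ i, (c + a i) := by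
  have hb : ∀ j, 0 ≤ b j := fun j => (ha _).trans (hab j)
  have hfactor : ∀ j, (c + b j) * a (Fin.castAdd k j) ≤ b j * (c + a (Fin.castAdd k j)) :=
    fun j => calc
      (c + b j) * a (Fin.castAdd k j) = c * a (Fin.castAdd k j) + b j * a (Fin.castAdd k j) :=
        add_mul _ _ _
      _ ≤ c * b j + b j * a (Fin.castAdd k j) := by gcongr; exact hab j
      _ = b j * (c + a (Fin.castAdd k j)) := by ring
  rw [Fin.prod_univ_add, Fin.prod_univ_add]
  calc (∏ j, (c + b j)) * ((∏ j, a (Fin.castAdd k j)) * ∏ r, a (Fin.natAdd m r))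
      = (∏ j, (c + b j) * a (Fin.castAdd k j)) * ∏ r, a (Fin.natAdd m r) := by
        rw [Finset.prod_mul_distrib, mul_assoc]
    _ ≤ (∏ j, b j * (c + a (Fin.castAdd k j))) * ∏ r, (c + a (Fin.natAdd m r)) :=
        mul_le_mul
          (Finset.prod_le_prod (fun j _ => mul_nonneg (add_nonneg hc (hb j)) (ha _))
            fun j _ => hfactor j)
          (Finset.prod_le_prod (fun r _ => ha _) fun r _ => le_add_of_nonneg_left hc)
          (Finset.prod_nonneg fun r _ => ha _)
          (Finset.prod_nonneg fun j _ => mul_nonneg (hb j) (add_nonneg hc (ha _)))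
    _ = (∏ j, b j) * ((∏ j, (c + a (Fin.castAdd k j))) * ∏ r, (c + a (Fin.natAdd m r))) := by
        rw [Finset.prod_mul_distrib, mul_assoc]

theorem mul_prod_add_lt_mul_prod_add {m k : ℕ} {α β c : ℝ} (hβ : 0 ≤ β) (hc : 0 ≤ c)
    {a : Fin (m + k) → ℝ} {b : Fin m → ℝ} (ha : ∀ i, 0 ≤ a i)
    (hab : ∀ j, a (Fin.castAdd k j) < b j) (h0 : α * ∏ j, b j < β * ∏ i, a i) :
    α * ∏ j, (c + b j) < β * ∏ i, (c + a i) := by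
  have hb : ∀ j, 0 < b j := fun j => (ha _).trans_lt (hab j)
  refine lt_of_mul_lt_mul_right ?_ (Finset.prod_pos (s := Finset.univ) fun j _ => hb j).le
  calc α * (∏ j, (c + b j)) * ∏ j, b j = (α * ∏ j, b j) * ∏ j, (c + b j) := by ring
    _ < (β * ∏ i, a i) * ∏ j, (c + b j) :=
        mul_lt_mul_of_pos_right h0 (Finset.prod_pos fun j _ => add_pos_of_nonneg_of_pos hc (hb j))
    _ = β * ((∏ j, (c + b j)) * ∏ i, a i) := by ring
    _ ≤ β * ((∏ j, b j) * ∏ i, (c + a i)) :=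
        mul_le_mul_of_nonneg_left (prod_add_mul_prod_le hc ha fun j => (hab j).le) hβ
    _ = β * (∏ i, (c + a i)) * ∏ j, b j := by ring

namespace Polynomial

theorem Splits.norm_eval_map_ofReal_mul_I_sq {P : ℝ[X]} (hP : P.Splits) (y : ℝ) :
    ‖(P.map (algebraMap ℝ ℂ)).eval (y * Complex.I)‖ ^ 2 =
      P.leadingCoeff ^ 2 * (P.roots.map fun x => y ^ 2 + x ^ 2).prod := by
  rw [(hP.map _).eval_eq_prod_roots, hP.roots_map_of_injective (algebraMap ℝ ℂ).injective,
    leadingCoeff_map, ← Complex.normSq_eq_norm_sq, map_mul, map_multiset_prod, Multiset.map_map,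
    Multiset.map_map, Complex.coe_algebraMap, Complex.normSq_ofReal, sq]
  congr 2
  refine Multiset.map_congr rfl fun x _ => ?_
  simp [Complex.normSq_apply]
  ring

theorem norm_eval_lt_of_abs_roots_lt {n m : ℕ} (hmn : m ≤ n) {P Q : ℝ[X]} (hP : P.Splits)
    (hQ : Q.Splits) (h0 : |Q.eval 0| < |P.eval 0|) {p : Fin n → ℝ} {q : Fin m → ℝ}
    (hp : P.roots = ↑(List.ofFn p)) (hq : Q.roots = ↑(List.ofFn q))
    (hlt : ∀ j, |p (Fin.castLE hmn j)| < |q j|) (y : ℝ) :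
    ‖(Q.map (algebraMap ℝ ℂ)).eval (y * Complex.I)‖ <
      ‖(P.map (algebraMap ℝ ℂ)).eval (y * Complex.I)‖ := by
  obtain ⟨k, rfl⟩ := Nat.exists_eq_add_of_le hmn
  have hsq : ∀ {N} {R : ℝ[X]} {r : Fin N → ℝ}, R.Splits → R.roots = ↑(List.ofFn r) →
      ∀ y : ℝ, ‖(R.map (algebraMap ℝ ℂ)).eval (y * Complex.I)‖ ^ 2 =
        R.leadingCoeff ^ 2 * ∏ i, (y ^ 2 + r i ^ 2) := by
    intro N R r hR hr y
    rw [hR.norm_eval_map_ofReal_mul_I_sq, hr, Multiset.map_coe, Multiset.prod_coe,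
      List.map_ofFn, List.prod_ofFn]
    rfl
  have hsq₀ : ∀ {N} {R : ℝ[X]} {r : Fin N → ℝ}, R.Splits → R.roots = ↑(List.ofFn r) →
      R.eval 0 ^ 2 = R.leadingCoeff ^ 2 * ∏ i, r i ^ 2 := by
    intro N R r hR hr
    simpa [← coeff_zero_eq_aeval_zero', coeff_zero_eq_eval_zero] using hsq hR hr 0
  refine (pow_lt_pow_iff_left₀ (norm_nonneg _) (norm_nonneg _) two_ne_zero).1 ?_
  rw [hsq hQ hq, hsq hP hp]
  refine mul_prod_add_lt_mul_prod_add (sq_nonneg _) (sq_nonneg y) (fun i => sq_nonneg _)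
    (fun j => sq_lt_sq.2 (hlt j)) ?_
  rw [← hsq₀ hQ hq, ← hsq₀ hP hp, ← sq_abs, ← sq_abs (P.eval 0)]
  exact pow_lt_pow_left₀ h0 (abs_nonneg _) two_ne_zero

end Polynomial

theorem stubborn_real_roots_general (n m : ℕ) (hnm : m < n) (P Q : Polynomial ℝ)
    (hPdeg : P.natDegree = n) (hQdeg : Q.natDegree = m)
    (hPsplit : (P.map (RingHom.id ℝ)).Splits) (hQsplit : (Q.map (RingHom.id ℝ)).Splits)
    (h0 : |Q.eval 0| < |P.eval 0|)
    (p : Fin n → ℝ) (q : Fin m → ℝ)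
    (hproots : P.roots = ↑(List.ofFn p)) (hqroots : Q.roots = ↑(List.ofFn q))
    (hlt : ∀ j : Fin m, |p (Fin.castLE hnm.le j)| < |q j|) :
    (Multiset.card
        ((((P + Q).map (algebraMap ℝ ℂ)).roots).filter fun z => z.re < 0) =
      Multiset.card (((P.map (algebraMap ℝ ℂ)).roots).filter fun z => z.re < 0)) ∧
    (Multiset.card
        ((((P + Q).map (algebraMap ℝ ℂ)).roots).filter fun z => 0 < z.re) =
      Multiset.card (((P.map (algebraMap ℝ ℂ)).roots).filter fun z => 0 < z.re)) := by
  rw [Polynomial.map_id] at hPsplit hQsplit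
  have hdeg : (Q.map (algebraMap ℝ ℂ)).degree < (P.map (algebraMap ℝ ℂ)).degree := by
    rw [degree_map, degree_map]
    exact degree_lt_degree (hPdeg ▸ hQdeg ▸ hnm)
  have haxis : ∀ t ∈ Set.Icc (0 : ℝ) 1, ∀ z ∈ (P.map (algebraMap ℝ ℂ) +
      C (t : ℂ) * Q.map (algebraMap ℝ ℂ)).roots, z.re ≠ 0 := by
    intro t ht z hroot hre
    have hz : z = (z.im : ℂ) * Complex.I := Complex.ext (by simp [hre]) (by simp)
    refine eval_add_C_mul_ne_zero (t := (t : ℂ)) (norm_eval_lt_of_abs_roots_lt hnm.le hPsplit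
      hQsplit h0 hproots hqroots hlt z.im) ?_ (hz ▸ isRoot_of_mem_roots hroot)
    rw [Complex.norm_real, Real.norm_of_nonneg ht.1]
    exact ht.2
  rw [Polynomial.map_add]
  constructor <;> refine card_roots_filter_add_eq_of_homotopy hdeg _ fun t ht z hz => ?_ <;>
    simpa using haxis t ht z hz

/-- **Stubborn Real Roots Theorem.**  Let `P` and `Q` be real polynomials of degrees
`n > m`, both splitting over `ℝ` (all roots real), with `|P(0)| > |Q(0)|`.  Let
`p : Fin n → ℝ` and `q : Fin m → ℝ` enumerate the roots of `P` and `Q` (with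
multiplicity) ordered by absolute value, and suppose `|p j| < |q j|` for every
`j = 1, …, m`.  Then `S = P + Q` has the same number of roots (with multiplicity)
with strictly negative real part as `P`, and likewise for strictly positive real part. -/
theorem stubborn_real_roots (n m : ℕ) (hnm : m < n) (P Q : Polynomial ℝ)
    (hP0 : P ≠ 0) (hQ0 : Q ≠ 0) (hPdeg : P.natDegree = n) (hQdeg : Q.natDegree = m)
    (hPsplit : (P.map (RingHom.id ℝ)).Splits) (hQsplit : (Q.map (RingHom.id ℝ)).Splits)
    (h0 : |Q.eval 0| < |P.eval 0|)
    (p : Fin n → ℝ) (q : Fin m → ℝ)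
    (hproots : P.roots = ↑(List.ofFn p)) (hqroots : Q.roots = ↑(List.ofFn q))
    (hpmono : ∀ i j : Fin n, i ≤ j → |p i| ≤ |p j|)
    (hqmono : ∀ i j : Fin m, i ≤ j → |q i| ≤ |q j|)
    (hlt : ∀ j : Fin m, |p (Fin.castLE hnm.le j)| < |q j|) :
    (Multiset.card
        ((((P + Q).map (algebraMap ℝ ℂ)).roots).filter fun z => z.re < 0) =
      Multiset.card (((P.map (algebraMap ℝ ℂ)).roots).filter fun z => z.re < 0)) ∧
    (Multiset.card
        ((((P + Q).map (algebraMap ℝ ℂ)).roots).filter fun z => 0 < z.re) =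
      Multiset.card (((P.map (algebraMap ℝ ℂ)).roots).filter fun z => 0 < z.re)) :=
  stubborn_real_roots_general n m hnm P Q hPdeg hQdeg hPsplit hQsplit h0 p q hproots hqroots hlt
end

section
/- Stubborn Complex Roots Theorem (general form): let P and Q be real polynomials of degrees n and m respectively with n > m. Suppose all m roots of Q are real and positive; P has at least m real roots, and each non-real root p_k of P satisfies |Re(p_k)| > |Im(p_k)|. Suppose |P(0)| > |Q(0)|. Let |p₁| ≤ ... ≤ |p_m| be the m smallest (in absolute value) real roots of P and |q₁| ≤ ... ≤ |q_m| the roots of Q, ordered by absolute value, and suppose |p_j| < |q_j| for every j = 1, ..., m. Then the number of roots (with multiplicity) of S = P + Q with strictly negative (respectively strictly positive) real part equals the number of roots of P with strictly negative (respectively strictly positive) real part. -/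
/-!
On the imaginary axis a real polynomial `f` satisfies `‖f(it)‖² = lc(f)² ∏ ‖z² + t²‖`, the
product running over its complex roots. A root with `|Im z| ≤ |Re z|` has `Re z² ≥ 0`, so its
factor grows with `|t|`, and a pair of real roots with `|p| ≤ |q|` has
`(q² + t²) / q² ≤ (p² + t²) / p²`. Pairing the roots of `Q` with the smallest real roots of `P`
gives `‖Q(it)‖ / |Q(0)| ≤ ‖P(it)‖ / |P(0)|`, so `|Q(0)| < |P(0)|` yields `‖Q(it)‖ < ‖P(it)‖` for
every real `t`. Hence no `P + cQ` with `‖c‖ ≤ 1` vanishes on the imaginary axis. As `c` varies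
these polynomials keep the degree and leading coefficient of `P`, so their roots stay bounded and
(by compactness) move continuously; the number of roots in either open half-plane is therefore
locally constant in `c`, hence constant on the disc `‖c‖ ≤ 1`. Compare `c = 0` with `c = 1`.
-/

open Polynomial Filter Topology Complex

lemma Multiset.exists_eq_ofFn {α : Type*} {s : Multiset α} {n : ℕ} (hs : card s = n) :
    ∃ z : Fin n → α, s = ↑(List.ofFn z) := by
  induction s using Quotient.inductionOn with
  | h l =>
    obtain rfl : l.length = n := hs
    exact ⟨l.get, by rw [List.ofFn_get]; rfl⟩

lemma Multiset.card_filter_ofFn_eq {α : Type*} {n : ℕ} {p : α → Prop} [DecidablePred p]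
    {z w : Fin n → α} (h : ∀ j, p (z j) ↔ p (w j)) :
    card ((↑(List.ofFn z) : Multiset α).filter p) =
      card ((↑(List.ofFn w) : Multiset α).filter p) := by
  simp only [← Fin.univ_val_map, Multiset.filter_map, Multiset.card_map]
  exact congrArg card (Multiset.filter_congr fun j _ => h j)

lemma Filter.Tendsto.eventually_mem_iff {ι X : Type*} [TopologicalSpace X] {l : Filter ι}
    {z : ι → X} {w : X} {s : Set X} (hz : Tendsto z l (𝓝 w)) (hw : w ∉ frontier s) :
    ∀ᶠ i in l, z i ∈ s ↔ w ∈ s := by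
  rw [← Set.mem_compl_iff, compl_frontier_eq_union_interior] at hw
  rcases hw with hw | hw
  · filter_upwards [hz (mem_interior_iff_mem_nhds.mp hw)] with i hi
    exact iff_of_true hi (interior_subset hw)
  · filter_upwards [hz (mem_interior_iff_mem_nhds.mp hw)] with i hi
    exact iff_of_false hi (interior_subset hw)

namespace Polynomial

section Perturbation

variable {R : Type*} [Semiring R] {f g : R[X]}

lemma degree_C_mul_lt_s10 (hfg : g.degree < f.degree) (c : R) : (C c * g).degree < f.degree :=
  lt_of_le_of_lt (smul_eq_C_mul (R := R) c ▸ degree_smul_le c g) hfg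

lemma natDegree_add_C_mul (hfg : g.degree < f.degree) (c : R) :
    (f + C c * g).natDegree = f.natDegree :=
  natDegree_add_eq_left_of_degree_lt (degree_C_mul_lt_s10 hfg c)

lemma leadingCoeff_add_C_mul (hfg : g.degree < f.degree) (c : R) :
    (f + C c * g).leadingCoeff = f.leadingCoeff :=
  leadingCoeff_add_of_degree_lt' (degree_C_mul_lt_s10 hfg c)

lemma add_C_mul_ne_zero (hfg : g.degree < f.degree) (c : R) : f + C c * g ≠ 0 := by
  refine ne_zero_of_degree_gt (n := g.degree) ?_
  rwa [degree_add_eq_left_of_degree_lt (degree_C_mul_lt_s10 hfg c)]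

end Perturbation

section RootBound

variable {K : Type*} [NormedField K] {f g : K[X]}

lemma norm_le_of_mem_roots_add_C_mul (hfg : g.degree < f.degree) {c : K} {R : ℝ} (hc : ‖c‖ ≤ R)
    {z : K} (hz : z ∈ (f + C c * g).roots) :
    ‖z‖ ≤ (∑ i ∈ Finset.range f.natDegree, (‖f.coeff i‖ + R * ‖g.coeff i‖)) /
      ‖f.leadingCoeff‖ + 1 := by
  have hcauchy :=
    (IsRoot.norm_lt_cauchyBound (add_C_mul_ne_zero hfg c) (isRoot_of_mem_roots hz)).le
  rw [cauchyBound, natDegree_add_C_mul hfg, leadingCoeff_add_C_mul hfg] at hcauchy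
  have hsup : (((Finset.range f.natDegree).sup fun i => ‖(f + C c * g).coeff i‖₊ : NNReal) : ℝ) ≤
      ∑ i ∈ Finset.range f.natDegree, (‖f.coeff i‖ + R * ‖g.coeff i‖) := calc
    _ ≤ ((∑ i ∈ Finset.range f.natDegree, ‖(f + C c * g).coeff i‖₊ : NNReal) : ℝ) :=
      NNReal.coe_le_coe.mpr (Finset.sup_le fun i hi =>
        Finset.single_le_sum (f := fun i => ‖(f + C c * g).coeff i‖₊) (fun _ _ => zero_le) hi)
    _ ≤ _ := by
      push_cast
      refine Finset.sum_le_sum fun i _ => ?_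
      rw [coeff_add, coeff_C_mul]
      refine (norm_add_le _ _).trans (add_le_add_right ?_ _)
      rw [norm_mul]
      exact mul_le_mul_of_nonneg_right hc (norm_nonneg _)
  calc ‖z‖ = (‖z‖₊ : ℝ) := rfl
    _ ≤ _ := NNReal.coe_le_coe.mpr hcauchy
    _ ≤ _ := by
      push_cast
      gcongr

lemma eval_add_C_mul_ne_zero_s10 {c z : K} (hc : ‖c‖ ≤ 1) (h : ‖g.eval z‖ < ‖f.eval z‖) :
    (f + C c * g).eval z ≠ 0 := by
  rw [eval_add, eval_mul, eval_C, ← sub_neg_eq_add, sub_ne_zero]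
  refine fun heq => h.not_ge ?_
  rw [heq, norm_neg, norm_mul]
  exact mul_le_of_le_one_left (norm_nonneg _) hc

end RootBound

section ComplexRoots

lemma eval_eq_prod_of_roots_eq_ofFn {f : ℂ[X]} {n : ℕ} {z : Fin n → ℂ}
    (hz : f.roots = ↑(List.ofFn z)) (x : ℂ) : f.eval x = f.leadingCoeff * ∏ j, (x - z j) := by
  rw [(IsAlgClosed.splits f).eval_eq_prod_roots, hz, ← Fin.univ_val_map, Multiset.map_map]
  rfl

lemma roots_C_mul_prod_X_sub_C {n : ℕ} {a : ℂ} (ha : a ≠ 0) (w : Fin n → ℂ) :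
    (C a * ∏ j, (X - C (w j))).roots = ↑(List.ofFn w) := by
  have : ∏ j, (X - C (w j)) = ((Finset.univ.val.map w).map fun a => X - C a).prod := by
    rw [Multiset.map_map]; rfl
  rw [roots_C_mul _ ha, this, roots_multiset_prod_X_sub_C, Fin.univ_val_map]

theorem exists_subseq_tendsto_roots {F : ℕ → ℂ[X]} {f : ℂ[X]} {B : ℝ} (hf : f ≠ 0)
    (hdeg : ∀ i, (F i).natDegree = f.natDegree) (hlc : ∀ i, (F i).leadingCoeff = f.leadingCoeff)
    (hB : ∀ i, ∀ z ∈ (F i).roots, ‖z‖ ≤ B)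
    (hF : ∀ x, Tendsto (fun i => (F i).eval x) atTop (𝓝 (f.eval x))) :
    ∃ (φ : ℕ → ℕ) (z : ℕ → Fin f.natDegree → ℂ) (w : Fin f.natDegree → ℂ), StrictMono φ ∧
      (∀ i, (F (φ i)).roots = ↑(List.ofFn (z i))) ∧ f.roots = ↑(List.ofFn w) ∧
      Tendsto z atTop (𝓝 w) := by
  have hcard (i : ℕ) : Multiset.card (F i).roots = f.natDegree :=
    hdeg i ▸ splits_iff_card_roots.mp (IsAlgClosed.splits _)
  choose z hz using fun i => Multiset.exists_eq_ofFn (hcard i)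
  have hzB (i : ℕ) : z i ∈ Set.univ.pi fun _ => Metric.closedBall (0 : ℂ) B := fun j _ => by
    simpa using hB i (z i j) (by rw [hz i]; simp)
  obtain ⟨w, -, φ, hφ, hzw⟩ :=
    (isCompact_univ_pi fun _ => isCompact_closedBall (0 : ℂ) B).tendsto_subseq hzB
  have heval (x : ℂ) : f.eval x = f.leadingCoeff * ∏ j, (x - w j) := by
    refine tendsto_nhds_unique ((hF x).comp hφ.tendsto_atTop) ?_
    simp only [Function.comp_def, eval_eq_prod_of_roots_eq_ofFn (hz _), hlc]
    exact tendsto_const_nhds.mul <| tendsto_finsetProd _ fun j _ =>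
      tendsto_const_nhds.sub ((continuous_apply j).tendsto w |>.comp hzw)
  have hfw : f = C f.leadingCoeff * ∏ j, (X - C (w j)) :=
    Polynomial.funext fun x => by simp [heval, eval_prod]
  refine ⟨φ, z ∘ φ, w, hφ, fun i => hz (φ i), ?_, hzw⟩
  rw [← roots_C_mul_prod_X_sub_C (leadingCoeff_ne_zero.mpr hf) w, ← hfw]

theorem frequently_card_filter_roots_eq {F : ℕ → ℂ[X]} {f : ℂ[X]} {B : ℝ} (hf : f ≠ 0)
    (hdeg : ∀ i, (F i).natDegree = f.natDegree) (hlc : ∀ i, (F i).leadingCoeff = f.leadingCoeff)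
    (hB : ∀ i, ∀ z ∈ (F i).roots, ‖z‖ ≤ B)
    (hF : ∀ x, Tendsto (fun i => (F i).eval x) atTop (𝓝 (f.eval x)))
    {p : ℂ → Prop} [DecidablePred p] (hfr : ∀ z ∈ f.roots, z ∉ frontier {z | p z}) :
    ∃ᶠ i in atTop, Multiset.card ((F i).roots.filter p) = Multiset.card (f.roots.filter p) := by
  obtain ⟨φ, z, w, hφ, hz, hw, hzw⟩ := exists_subseq_tendsto_roots hf hdeg hlc hB hF
  have hsign : ∀ᶠ i in atTop, ∀ j, p (z i j) ↔ p (w j) :=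
    eventually_all.mpr fun j => ((continuous_apply j).tendsto w |>.comp hzw).eventually_mem_iff
      (hfr (w j) (by rw [hw]; simp))
  refine hφ.tendsto_atTop.frequently (hsign.mono fun i hi => ?_).frequently
  rw [hz, hw]
  exact Multiset.card_filter_ofFn_eq hi

variable {f g : ℂ[X]}

theorem eventually_card_filter_roots_add_C_mul_eq (hfg : g.degree < f.degree)
    {p : ℂ → Prop} [DecidablePred p] {c₀ : ℂ}
    (hfr : ∀ z ∈ (f + C c₀ * g).roots, z ∉ frontier {z | p z}) :
    ∀ᶠ c in 𝓝 c₀, Multiset.card ((f + C c * g).roots.filter p) =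
      Multiset.card ((f + C c₀ * g).roots.filter p) := by
  by_contra hne
  obtain ⟨c, hc, hcne⟩ := exists_seq_forall_of_frequently (not_eventually.mp hne)
  obtain ⟨R, hR⟩ := isBounded_iff_forall_norm_le.mp (Metric.isBounded_range_of_tendsto c hc)
  have hF (x : ℂ) : Tendsto (fun i => (f + C (c i) * g).eval x) atTop
      (𝓝 ((f + C c₀ * g).eval x)) := by
    simp only [eval_add, eval_mul, eval_C]
    exact tendsto_const_nhds.add (hc.mul tendsto_const_nhds)
  have hfreq := frequently_card_filter_roots_eq (add_C_mul_ne_zero hfg c₀)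
    (fun i => by rw [natDegree_add_C_mul hfg, natDegree_add_C_mul hfg])
    (fun i => by rw [leadingCoeff_add_C_mul hfg, leadingCoeff_add_C_mul hfg])
    (fun i z hz => norm_le_of_mem_roots_add_C_mul hfg (hR _ ⟨i, rfl⟩) hz) hF hfr
  obtain ⟨i, hi⟩ := hfreq.exists
  exact hcne i hi

theorem _root_.IsPreconnected.card_filter_roots_add_C_mul_eq {S : Set ℂ} (hS : IsPreconnected S)
    (hfg : g.degree < f.degree) {p : ℂ → Prop} [DecidablePred p]
    (hfr : ∀ c ∈ S, ∀ z ∈ (f + C c * g).roots, z ∉ frontier {z | p z}) {a b : ℂ}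
    (ha : a ∈ S) (hb : b ∈ S) :
    Multiset.card ((f + C a * g).roots.filter p) = Multiset.card ((f + C b * g).roots.filter p) :=
  hS.constant (fun c hc => ContinuousAt.continuousWithinAt <| tendsto_nhds_of_eventually_eq
    (eventually_card_filter_roots_add_C_mul_eq hfg (hfr c hc))) ha hb

lemma re_ne_zero_of_mem_roots_add_C_mul (hfg : ∀ t : ℝ, ‖g.eval (t * I)‖ < ‖f.eval (t * I)‖)
    {c z : ℂ} (hc : ‖c‖ ≤ 1) (hz : z ∈ (f + C c * g).roots) : z.re ≠ 0 := by
  intro hz0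
  have hz_axis : z = z.im * I := Complex.ext (by simp [hz0]) (by simp)
  refine eval_add_C_mul_ne_zero_s10 hc ?_ (mem_roots'.mp hz).2
  rw [hz_axis]
  exact hfg z.im

end ComplexRoots

end Polynomial

lemma Complex.norm_sq_add_sq_le {z : ℂ} (hz : |z.im| ≤ |z.re|) {u t : ℝ} (hut : |u| ≤ |t|) :
    ‖z ^ 2 + (u : ℂ) ^ 2‖ ≤ ‖z ^ 2 + (t : ℂ) ^ 2‖ := by
  have hz2 := sq_le_sq.mpr hz
  have hut2 := sq_le_sq.mpr hut
  refine le_of_pow_le_pow_left₀ two_ne_zero (norm_nonneg _) ?_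
  rw [Complex.sq_norm, Complex.sq_norm, normSq_apply, normSq_apply]
  simp only [add_re, add_im, pow_two, mul_re, mul_im, ofReal_re, ofReal_im]
  nlinarith [mul_nonneg (sub_nonneg.mpr hz2) (sub_nonneg.mpr hut2), sq_nonneg u, sq_nonneg t]

lemma Finset.prod_sq_add_sq_mul_prod_sq_add_sq_le {ι : Type*} (s : Finset ι) {p q : ι → ℝ}
    (hpq : ∀ j ∈ s, |p j| ≤ |q j|) {u t : ℝ} (hut : |u| ≤ |t|) :
    (∏ j ∈ s, (q j ^ 2 + t ^ 2)) * ∏ j ∈ s, (p j ^ 2 + u ^ 2) ≤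
      (∏ j ∈ s, (p j ^ 2 + t ^ 2)) * ∏ j ∈ s, (q j ^ 2 + u ^ 2) := by
  rw [← prod_mul_distrib, ← prod_mul_distrib]
  refine prod_le_prod (fun j _ => by positivity) fun j hj => ?_
  have hpq2 := sq_le_sq.mpr (hpq j hj)
  have hut2 := sq_le_sq.mpr hut
  nlinarith [mul_nonneg (sub_nonneg.mpr hpq2) (sub_nonneg.mpr hut2)]

noncomputable def imagAxisProd (s : Multiset ℂ) (t : ℝ) : ℝ :=
  (s.map fun z => ‖z ^ 2 + (t : ℂ) ^ 2‖).prod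

lemma imagAxisProd_add (s r : Multiset ℂ) (t : ℝ) :
    imagAxisProd (s + r) t = imagAxisProd s t * imagAxisProd r t := by
  simp only [imagAxisProd, Multiset.map_add, Multiset.prod_add]

lemma imagAxisProd_nonneg (s : Multiset ℂ) (t : ℝ) : 0 ≤ imagAxisProd s t :=
  Multiset.prod_nonneg fun _ h => by obtain ⟨z, _, rfl⟩ := Multiset.mem_map.mp h; positivity

lemma imagAxisProd_mono {s : Multiset ℂ} (hs : ∀ z ∈ s, |z.im| ≤ |z.re|) {u t : ℝ}
    (hut : |u| ≤ |t|) : imagAxisProd s u ≤ imagAxisProd s t :=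
  Multiset.prod_map_le_prod_map₀ _ _ (fun _ _ => norm_nonneg _) fun z hz =>
    Complex.norm_sq_add_sq_le (hs z hz) hut

lemma imagAxisProd_map_ofReal_ofFn {m : ℕ} (p : Fin m → ℝ) (t : ℝ) :
    imagAxisProd ((↑(List.ofFn p) : Multiset ℝ).map (algebraMap ℝ ℂ)) t =
      ∏ j, (p j ^ 2 + t ^ 2) := by
  rw [imagAxisProd, ← Fin.univ_val_map, Multiset.map_map, Multiset.map_map,
    Finset.prod_eq_multiset_prod]
  congr 1
  refine Multiset.map_congr rfl fun j _ => ?_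
  rw [Function.comp_apply, Function.comp_apply, Complex.coe_algebraMap, ← ofReal_pow, ← ofReal_pow,
    ← ofReal_add, norm_real, Real.norm_of_nonneg (by positivity)]

namespace Polynomial

section ImaginaryAxis

lemma Splits.eval_mul_eval_neg {R : Type*} [CommRing R] [IsDomain R] {f : R[X]} (hf : f.Splits)
    (x : R) : f.eval x * f.eval (-x) =
      f.leadingCoeff ^ 2 * (f.roots.map fun z => z ^ 2 - x ^ 2).prod := by
  rw [hf.eval_eq_prod_roots, hf.eval_eq_prod_roots, mul_mul_mul_comm, ← Multiset.prod_map_mul,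
    sq]
  congr 2
  exact Multiset.map_congr rfl fun z _ => by ring

variable {P Q : ℝ[X]}

lemma norm_sq_eval_mul_I (f : ℝ[X]) (t : ℝ) :
    ‖(f.map (algebraMap ℝ ℂ)).eval (t * I)‖ ^ 2 =
      f.leadingCoeff ^ 2 * imagAxisProd (f.map (algebraMap ℝ ℂ)).roots t := by
  have hconj : (f.map (algebraMap ℝ ℂ)).eval (-(t * I)) =
      starRingEnd ℂ ((f.map (algebraMap ℝ ℂ)).eval (t * I)) := by
    simpa [aeval_def, eval_map] using aeval_conj f (t * I)
  have hsq (z : ℂ) : z ^ 2 - (t * I) ^ 2 = z ^ 2 + (t : ℂ) ^ 2 := by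
    rw [mul_pow, I_sq]; ring
  have hprod (s : Multiset ℂ) : ‖s.prod‖ = (s.map (‖·‖)).prod := map_multiset_prod normHom s
  have h := congrArg norm
    ((IsAlgClosed.splits (f.map (algebraMap ℝ ℂ))).eval_mul_eval_neg (t * I))
  simp only [hsq] at h
  rw [hconj, mul_conj, normSq_eq_norm_sq, norm_mul, norm_pow, hprod, Multiset.map_map,
    leadingCoeff_map_of_injective (algebraMap ℝ ℂ).injective, norm_real, Real.norm_eq_abs,
    abs_of_nonneg (by positivity), coe_algebraMap, norm_real, Real.norm_eq_abs, sq_abs] at h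
  exact h

lemma abs_eval_zero_eq_norm_eval_mul_I (f : ℝ[X]) :
    |f.eval 0| = ‖(f.map (algebraMap ℝ ℂ)).eval ((0 : ℝ) * I)‖ := by
  rw [ofReal_zero, zero_mul, eval_zero_map]
  simp

lemma abs_eval_zero_le_norm_eval_mul_I
    (hP : ∀ z ∈ (P.map (algebraMap ℝ ℂ)).roots, |z.im| ≤ |z.re|) (t : ℝ) :
    |P.eval 0| ≤ ‖(P.map (algebraMap ℝ ℂ)).eval (t * I)‖ := by
  refine le_of_pow_le_pow_left₀ two_ne_zero (norm_nonneg _) ?_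
  rw [abs_eval_zero_eq_norm_eval_mul_I, norm_sq_eval_mul_I, norm_sq_eval_mul_I]
  exact mul_le_mul_of_nonneg_left (imagAxisProd_mono hP (by simp)) (sq_nonneg _)

theorem norm_eval_mul_I_mul_abs_eval_zero_le {m : ℕ} {p q : Fin m → ℝ}
    (hp : (↑(List.ofFn p) : Multiset ℝ) ≤ P.roots) (hq : Q.roots = ↑(List.ofFn q))
    (hQ : Multiset.card Q.roots = Q.natDegree) (hpq : ∀ j, |p j| ≤ |q j|)
    (hP : ∀ z ∈ (P.map (algebraMap ℝ ℂ)).roots, |z.im| ≤ |z.re|) (t : ℝ) :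
    ‖(Q.map (algebraMap ℝ ℂ)).eval (t * I)‖ * |P.eval 0| ≤
      ‖(P.map (algebraMap ℝ ℂ)).eval (t * I)‖ * |Q.eval 0| := by
  obtain ⟨r, hroots⟩ : ∃ r, (P.map (algebraMap ℝ ℂ)).roots =
      (↑(List.ofFn p) : Multiset ℝ).map (algebraMap ℝ ℂ) + r :=
    Multiset.le_iff_exists_add.mp <|
      (Multiset.map_le_map hp).trans (map_roots_le_of_injective P (algebraMap ℝ ℂ).injective)
  have hQroots : (Q.map (algebraMap ℝ ℂ)).roots =
      (↑(List.ofFn q) : Multiset ℝ).map (algebraMap ℝ ℂ) := by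
    rw [← hq, roots_map_of_injective_of_card_eq_natDegree (algebraMap ℝ ℂ).injective hQ]
  have hr : ∀ z ∈ r, |z.im| ≤ |z.re| := fun z hz =>
    hP z (hroots ▸ Multiset.mem_add.mpr (Or.inr hz))
  have h0t : |(0 : ℝ)| ≤ |t| := by simp
  have hprod := mul_le_mul
    (Finset.univ.prod_sq_add_sq_mul_prod_sq_add_sq_le (fun j _ => hpq j) h0t)
    (imagAxisProd_mono hr h0t) (imagAxisProd_nonneg r 0) (by positivity)
  refine le_of_pow_le_pow_left₀ two_ne_zero (by positivity) ?_
  simp only [mul_pow, abs_eval_zero_eq_norm_eval_mul_I, norm_sq_eval_mul_I, hroots, hQroots,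
    imagAxisProd_add, imagAxisProd_map_ofReal_ofFn]
  have hlc : 0 ≤ Q.leadingCoeff ^ 2 * P.leadingCoeff ^ 2 := by positivity
  linarith [mul_le_mul_of_nonneg_left hprod hlc]

theorem norm_eval_mul_I_lt {m : ℕ} {p q : Fin m → ℝ}
    (hp : (↑(List.ofFn p) : Multiset ℝ) ≤ P.roots) (hq : Q.roots = ↑(List.ofFn q))
    (hQ : Multiset.card Q.roots = Q.natDegree) (hpq : ∀ j, |p j| ≤ |q j|)
    (hP : ∀ z ∈ (P.map (algebraMap ℝ ℂ)).roots, |z.im| ≤ |z.re|) (h0 : |Q.eval 0| < |P.eval 0|)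
    (t : ℝ) :
    ‖(Q.map (algebraMap ℝ ℂ)).eval (t * I)‖ < ‖(P.map (algebraMap ℝ ℂ)).eval (t * I)‖ := by
  have hP0 : 0 < |P.eval 0| := (abs_nonneg _).trans_lt h0
  refine lt_of_mul_lt_mul_right
    ((norm_eval_mul_I_mul_abs_eval_zero_le hp hq hQ hpq hP t).trans_lt ?_) hP0.le
  exact mul_lt_mul_of_pos_left h0 (hP0.trans_le (abs_eval_zero_le_norm_eval_mul_I hP t))

end ImaginaryAxis

end Polynomial

theorem stubborn_complex_roots_general (n m k : ℕ) (hnm : m < n) (P Q : Polynomial ℝ)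
    (hPdeg : P.natDegree = n) (hQdeg : Q.natDegree = m)
    (hmk : m ≤ k)
    (p : Fin k → ℝ) (q : Fin m → ℝ)
    (hproots : P.roots = ↑(List.ofFn p)) (hqroots : Q.roots = ↑(List.ofFn q))
    (hcomplex : ∀ z : ℂ, (P.map (algebraMap ℝ ℂ)).eval z = 0 → z.im ≠ 0 →
      |z.im| < |z.re|)
    (h0 : |Q.eval 0| < |P.eval 0|)
    (hlt : ∀ j : Fin m, |p (Fin.castLE hmk j)| < |q j|) :
    (Multiset.card
        ((((P + Q).map (algebraMap ℝ ℂ)).roots).filter fun z => z.re < 0) =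
      Multiset.card (((P.map (algebraMap ℝ ℂ)).roots).filter fun z => z.re < 0)) ∧
    (Multiset.card
        ((((P + Q).map (algebraMap ℝ ℂ)).roots).filter fun z => 0 < z.re) =
      Multiset.card (((P.map (algebraMap ℝ ℂ)).roots).filter fun z => 0 < z.re)) := by
  set Pc := P.map (algebraMap ℝ ℂ)
  set Qc := Q.map (algebraMap ℝ ℂ)
  have hPaxis : ∀ z ∈ Pc.roots, |z.im| ≤ |z.re| := fun z hz => by
    by_cases him : z.im = 0
    · simp [him]
    · exact (hcomplex z (mem_roots'.mp hz).2 him).le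
  have hprefix : (↑(List.ofFn (Fin.take m hmk p)) : Multiset ℝ) ≤ P.roots := by
    rw [hproots, Fin.ofFn_take_eq_take_ofFn]
    exact Multiset.coe_le.mpr (List.take_sublist _ _).subperm
  have hQPaxis (t : ℝ) : ‖Qc.eval (t * I)‖ < ‖Pc.eval (t * I)‖ :=
    norm_eval_mul_I_lt hprefix hqroots (by simp [hqroots, hQdeg]) (fun j => (hlt j).le) hPaxis
      h0 t
  have hdeg : Qc.degree < Pc.degree :=
    degree_lt_degree (by simpa [Pc, Qc, hPdeg, hQdeg] using hnm)
  have hre : ∀ c ∈ Metric.closedBall (0 : ℂ) 1, ∀ z ∈ (Pc + C c * Qc).roots, z.re ≠ 0 :=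
    fun c hc z hz => re_ne_zero_of_mem_roots_add_C_mul hQPaxis (by simpa using hc) hz
  have hcount (side : ℂ → Prop) [DecidablePred side]
      (hside : frontier {z | side z} ⊆ {z | z.re = 0}) :
      Multiset.card ((Pc + Qc).roots.filter side) = Multiset.card (Pc.roots.filter side) := by
    simpa using (convex_closedBall (0 : ℂ) 1).isPreconnected.card_filter_roots_add_C_mul_eq hdeg
      (fun c hc z hz hzp => hre c hc z hz (hside hzp)) (a := 1) (b := 0) (by simp) (by simp)
  rw [Polynomial.map_add]
  exact ⟨hcount _ (frontier_lt_subset_eq continuous_re continuous_const),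
    hcount _ fun z hz => (frontier_lt_subset_eq continuous_const continuous_re hz).symm⟩

/-- **Stubborn Complex Roots Theorem (general form).**  Let `P` and `Q` be real
polynomials of degrees `n > m`.  All `m` roots of `Q` are real and positive; `P` has
at least `m` real roots (`k` real roots in total, counted with multiplicity, enumerated
in order of absolute value by `p : Fin k → ℝ`), and every non-real complex root of `P`
has `|Re| > |Im|`.  Suppose `|P(0)| > |Q(0)|` and that the `m` smallest (in absolute
value) real roots of `P` satisfy `|p j| < |q j|` for `j = 1, …, m`, where
`q : Fin m → ℝ` enumerates the roots of `Q` ordered by absolute value.  Then `S = P + Q`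
has the same number of roots (with multiplicity) with strictly negative (resp. strictly
positive) real part as `P`. -/
theorem stubborn_complex_roots (n m k : ℕ) (hnm : m < n) (P Q : Polynomial ℝ)
    (hP0 : P ≠ 0) (hQ0 : Q ≠ 0) (hPdeg : P.natDegree = n) (hQdeg : Q.natDegree = m)
    (hQsplit : (Q.map (RingHom.id ℝ)).Splits)
    (hk : Multiset.card P.roots = k) (hmk : m ≤ k)
    (p : Fin k → ℝ) (q : Fin m → ℝ)
    (hproots : P.roots = ↑(List.ofFn p)) (hqroots : Q.roots = ↑(List.ofFn q))
    (hqpos : ∀ j, 0 < q j)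
    (hcomplex : ∀ z : ℂ, (P.map (algebraMap ℝ ℂ)).eval z = 0 → z.im ≠ 0 →
      |z.im| < |z.re|)
    (h0 : |Q.eval 0| < |P.eval 0|)
    (hpmono : ∀ i j : Fin k, i ≤ j → |p i| ≤ |p j|)
    (hqmono : ∀ i j : Fin m, i ≤ j → |q i| ≤ |q j|)
    (hlt : ∀ j : Fin m, |p (Fin.castLE hmk j)| < |q j|) :
    (Multiset.card
        ((((P + Q).map (algebraMap ℝ ℂ)).roots).filter fun z => z.re < 0) =
      Multiset.card (((P.map (algebraMap ℝ ℂ)).roots).filter fun z => z.re < 0)) ∧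
    (Multiset.card
        ((((P + Q).map (algebraMap ℝ ℂ)).roots).filter fun z => 0 < z.re) =
      Multiset.card (((P.map (algebraMap ℝ ℂ)).roots).filter fun z => 0 < z.re)) :=
  stubborn_complex_roots_general n m k hnm P Q hPdeg hQdeg hmk p q hproots hqroots hcomplex h0 hlt
end

section
/- Monotonicity lemma for the Stubborn Real Roots Theorem: let n > m ≥ 1, let p₁, ..., p_n and q₁, ..., q_m be real numbers with |p_j| < |q_j| for j = 1, ..., m (after ordering by absolute value). Then the function y ↦ ∏_{i=1}^{n} (y² + p_i²) / ∏_{j=1}^{m} (y² + q_j²) is strictly increasing for y > 0. -/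
open Finset

/-- Monotonicity lemma for the Stubborn Real Roots Theorem: let `n > m ≥ 1` and let
`p₁, …, p_n`, `q₁, …, q_m` be reals, each family ordered by absolute value, with
`|p j| < |q j|` for `j = 1, …, m`.  Then
`y ↦ ∏_{i=1}^{n} (y² + pᵢ²) / ∏_{j=1}^{m} (y² + qⱼ²)` is strictly increasing for
`y > 0`. -/
theorem stubborn_real_roots_monotonicity (n m : ℕ) (hm : 1 ≤ m) (hnm : m < n)
    (p : Fin n → ℝ) (q : Fin m → ℝ)
    (hpmono : ∀ i j : Fin n, i ≤ j → |p i| ≤ |p j|)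
    (hqmono : ∀ i j : Fin m, i ≤ j → |q i| ≤ |q j|)
    (hlt : ∀ j : Fin m, |p (Fin.castLE hnm.le j)| < |q j|) :
    StrictMonoOn
      (fun y : ℝ => (∏ i, (y ^ 2 + p i ^ 2)) / (∏ j, (y ^ 2 + q j ^ 2)))
      (Set.Ioi (0 : ℝ)) := by
  intro a ha b hb hab
  simp only [Set.mem_Ioi] at ha hb
  have hA : (0:ℝ) < a ^ 2 := by positivity
  have hB : (0:ℝ) < b ^ 2 := by positivity
  have hAB : a ^ 2 < b ^ 2 := by nlinarith
  set P : ℕ → ℝ := fun i => if h : i < n then p ⟨i, h⟩ else 0 with hP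
  set Q : ℕ → ℝ := fun j => if h : j < m then q ⟨j, h⟩ else 0 with hQ
  have hpP : ∀ y : ℝ, ∏ i, (y ^ 2 + p i ^ 2) = ∏ i ∈ range n, (y ^ 2 + P i ^ 2) := by
    intro y
    rw [← Fin.prod_univ_eq_prod_range (fun i => (y ^ 2 + P i ^ 2)) n]
    exact Finset.prod_congr rfl fun i _ => by simp [hP, i.isLt]
  have hqQ : ∀ y : ℝ, ∏ j, (y ^ 2 + q j ^ 2) = ∏ j ∈ range m, (y ^ 2 + Q j ^ 2) := by
    intro y
    rw [← Fin.prod_univ_eq_prod_range (fun j => (y ^ 2 + Q j ^ 2)) m]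
    exact Finset.prod_congr rfl fun j _ => by simp [hQ, j.isLt]
  have hQpos : ∀ y : ℝ, 0 < y ^ 2 → 0 < ∏ j ∈ range m, (y ^ 2 + Q j ^ 2) := by
    intro y hy
    exact Finset.prod_pos fun j _ => by positivity
  simp only [hpP, hqQ]
  rw [div_lt_div_iff₀ (hQpos a hA) (hQpos b hB)]
  rw [← Finset.prod_range_mul_prod_Ico (fun i => a ^ 2 + P i ^ 2) hnm.le,
      ← Finset.prod_range_mul_prod_Ico (fun i => b ^ 2 + P i ^ 2) hnm.le,
      mul_right_comm, mul_right_comm (∏ i ∈ range m, (b ^ 2 + P i ^ 2)),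
      ← Finset.prod_mul_distrib, ← Finset.prod_mul_distrib]
  have h1 : ∏ j ∈ range m, ((a ^ 2 + P j ^ 2) * (b ^ 2 + Q j ^ 2)) <
      ∏ j ∈ range m, ((b ^ 2 + P j ^ 2) * (a ^ 2 + Q j ^ 2)) := by
    apply Finset.prod_lt_prod_of_nonempty
    · intro j _; positivity
    · intro j hj
      rw [Finset.mem_range] at hj
      have hjn : j < n := hj.trans hnm
      have hpq : P j ^ 2 < Q j ^ 2 := by
        have h' : |p ⟨j, hjn⟩| < |q ⟨j, hj⟩| := hlt ⟨j, hj⟩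
        have e1 : P j = p ⟨j, hjn⟩ := by simp [hP, hjn]
        have e2 : Q j = q ⟨j, hj⟩ := by simp [hQ, hj]
        rw [e1, e2, ← sq_abs (p _), ← sq_abs (q _)]
        exact pow_lt_pow_left₀ h' (abs_nonneg _) two_ne_zero
      nlinarith [sq_nonneg (P j), sq_nonneg (Q j)]
    · exact Finset.nonempty_range_iff.mpr (by omega)
  have h2 : ∏ i ∈ Ico m n, (a ^ 2 + P i ^ 2) < ∏ i ∈ Ico m n, (b ^ 2 + P i ^ 2) := by
    apply Finset.prod_lt_prod_of_nonempty
    · intro i _; positivity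
    · intro i _; linarith
    · rw [Finset.nonempty_Ico]; exact hnm
  exact mul_lt_mul'' h1 h2
    (Finset.prod_nonneg fun j _ => by positivity)
    (Finset.prod_nonneg fun i _ => by positivity)
end

section
/- Boundary inequality for the Stubborn Real Roots Theorem: under the hypotheses that P and Q are real polynomials of degrees n > m, both with all roots real, |P(0)| > |Q(0)|, and the roots ordered by absolute value satisfy |p_j| < |q_j| for j = 1, ..., m, one has |P(iy)| > |Q(iy)| for every real y. In particular P + Q has no roots on the imaginary axis. -/
open Polynomial Complex

/-!
Since all roots are real, `‖P(iy)‖² = lc(P)² ∏ᵢ (y² + pᵢ²)`, and likewise for `Q`. Normalised by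
the value at `y = 0`, each factor `(y² + q_j²) / q_j²` of `Q` is at most the matching factor
`(y² + p_j²) / p_j²` of `P`, because `p_j² ≤ q_j²`, while the `n - m` unmatched factors of `P`
are at least `1`. Hence the inequality `|Q(0)| < |P(0)|` propagates to the whole imaginary axis.
-/

theorem prod_add_mul_prod_le_prod_add_mul_prod {ι κ : Type*} [Fintype ι] [Fintype κ]
    (e : κ ↪ ι) {a : ι → ℝ} {b : κ → ℝ} {t : ℝ} (ha : ∀ i, 0 < a i)
    (hab : ∀ j, a (e j) ≤ b j) (ht : 0 ≤ t) :
    (∏ j, (t + b j)) * ∏ i, a i ≤ (∏ i, (t + a i)) * ∏ j, b j := by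
  classical
  have hsplit (f : ι → ℝ) : ∏ i, f i = (∏ j, f (e j)) * ∏ i ∈ (Finset.univ.map e)ᶜ, f i := by
    rw [← Finset.prod_map Finset.univ e f, Finset.prod_mul_prod_compl]
  have hb (j : κ) : 0 < b j := (ha (e j)).trans_le (hab j)
  have hmatched : ∏ j, (t + b j) * a (e j) ≤ ∏ j, (t + a (e j)) * b j :=
    Finset.prod_le_prod (fun j _ => by positivity [ha (e j), hb j]) fun j _ => by
      nlinarith [mul_le_mul_of_nonneg_left (hab j) ht]
  have hunmatched : ∏ i ∈ (Finset.univ.map e)ᶜ, a i ≤ ∏ i ∈ (Finset.univ.map e)ᶜ, (t + a i) :=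
    Finset.prod_le_prod (fun i _ => (ha i).le) fun i _ => le_add_of_nonneg_left ht
  calc (∏ j, (t + b j)) * ∏ i, a i
      = (∏ j, (t + b j) * a (e j)) * ∏ i ∈ (Finset.univ.map e)ᶜ, a i := by
        rw [hsplit a, Finset.prod_mul_distrib, mul_assoc]
    _ ≤ (∏ j, (t + a (e j)) * b j) * ∏ i ∈ (Finset.univ.map e)ᶜ, (t + a i) :=
        mul_le_mul hmatched hunmatched (Finset.prod_nonneg fun i _ => (ha i).le)
          (Finset.prod_nonneg fun j _ => by positivity [ha (e j), hb j])
    _ = (∏ i, (t + a i)) * ∏ j, b j := by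
        rw [hsplit (t + a ·), Finset.prod_mul_distrib]
        ring

theorem mul_prod_add_lt_mul_prod_add_s13 {ι κ : Type*} [Fintype ι] [Fintype κ]
    (e : κ ↪ ι) {a : ι → ℝ} {b : κ → ℝ} {A B t : ℝ} (ha : ∀ i, 0 < a i)
    (hab : ∀ j, a (e j) ≤ b j) (hB : 0 ≤ B) (ht : 0 ≤ t)
    (h : B * ∏ j, b j < A * ∏ i, a i) :
    B * ∏ j, (t + b j) < A * ∏ i, (t + a i) := by
  have hprod_a : 0 < ∏ i, a i := Finset.prod_pos fun i _ => ha i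
  have hprod_ta : 0 < ∏ i, (t + a i) := Finset.prod_pos fun i _ => by linarith [ha i]
  refine lt_of_mul_lt_mul_right ?_ hprod_a.le
  calc B * (∏ j, (t + b j)) * ∏ i, a i ≤ B * ((∏ i, (t + a i)) * ∏ j, b j) := by
        rw [mul_assoc]
        exact mul_le_mul_of_nonneg_left (prod_add_mul_prod_le_prod_add_mul_prod e ha hab ht) hB
    _ = (B * ∏ j, b j) * ∏ i, (t + a i) := by ring
    _ < (A * ∏ i, a i) * ∏ i, (t + a i) := mul_lt_mul_of_pos_right h hprod_ta
    _ = A * (∏ i, (t + a i)) * ∏ i, a i := by ring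

theorem norm_sq_eval_mul_I_of_splits {R : ℝ[X]} (hR : R.Splits) (y : ℝ) :
    ‖(R.map (algebraMap ℝ ℂ)).eval (y * I)‖ ^ 2 =
      R.leadingCoeff ^ 2 * (R.roots.map fun r => y ^ 2 + r ^ 2).prod := by
  conv_lhs => rw [hR.eq_prod_roots]
  simp only [Polynomial.map_mul, map_C, eval_mul, eval_C, Polynomial.map_multiset_prod,
    eval_multiset_prod, Multiset.map_map, Function.comp_def, Polynomial.map_sub, map_X,
    eval_sub, eval_X, Complex.sq_norm, map_mul, map_multiset_prod]
  simp [normSq_apply, sq, add_comm]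

theorem norm_sq_eval_mul_I_of_roots_eq_ofFn {R : ℝ[X]} (hR : R.Splits) {k : ℕ} {r : Fin k → ℝ}
    (hr : R.roots = ↑(List.ofFn r)) (y : ℝ) :
    ‖(R.map (algebraMap ℝ ℂ)).eval (y * I)‖ ^ 2 = R.leadingCoeff ^ 2 * ∏ i, (y ^ 2 + r i ^ 2) := by
  rw [norm_sq_eval_mul_I_of_splits hR, hr, Multiset.map_coe, Multiset.prod_coe, List.map_ofFn,
    List.prod_ofFn]
  rfl

theorem norm_eval_map_zero_mul_I (R : ℝ[X]) :
    ‖(R.map (algebraMap ℝ ℂ)).eval ((0 : ℝ) * I)‖ = |R.eval 0| := by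
  simp [eval_map_algebraMap, aeval_def, eval₂_at_zero, coeff_zero_eq_eval_zero]

theorem stubborn_real_roots_boundary_general (n m : ℕ) (hnm : m < n) (P Q : Polynomial ℝ)
    (hPsplit : P.Splits) (hQsplit : Q.Splits)
    (h0 : |Q.eval 0| < |P.eval 0|)
    (p : Fin n → ℝ) (q : Fin m → ℝ)
    (hproots : P.roots = ↑(List.ofFn p)) (hqroots : Q.roots = ↑(List.ofFn q))
    (hlt : ∀ j : Fin m, |p (Fin.castLE hnm.le j)| < |q j|) :
    (∀ y : ℝ,
      ‖(Q.map (algebraMap ℝ ℂ)).eval (y * Complex.I)‖ <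
        ‖(P.map (algebraMap ℝ ℂ)).eval (y * Complex.I)‖) ∧
    (∀ y : ℝ, ((P + Q).map (algebraMap ℝ ℂ)).eval (y * Complex.I) ≠ 0) := by
  have hp_sq_pos (i : Fin n) : 0 < p i ^ 2 := by
    have hroot : P.IsRoot (p i) := isRoot_of_mem_roots (by simp [hproots])
    have hP0 : P.eval 0 ≠ 0 := abs_pos.mp ((abs_nonneg _).trans_lt h0)
    refine pow_two_pos_of_ne_zero fun hpi => hP0 ?_
    rwa [hpi] at hroot
  have hnorm_sq_lt (y : ℝ) : ‖(Q.map (algebraMap ℝ ℂ)).eval (y * I)‖ ^ 2 <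
      ‖(P.map (algebraMap ℝ ℂ)).eval (y * I)‖ ^ 2 := by
    have hat_zero := pow_lt_pow_left₀ h0 (abs_nonneg _) two_ne_zero
    rw [← norm_eval_map_zero_mul_I, ← norm_eval_map_zero_mul_I,
      norm_sq_eval_mul_I_of_roots_eq_ofFn hQsplit hqroots,
      norm_sq_eval_mul_I_of_roots_eq_ofFn hPsplit hproots] at hat_zero
    rw [norm_sq_eval_mul_I_of_roots_eq_ofFn hQsplit hqroots,
      norm_sq_eval_mul_I_of_roots_eq_ofFn hPsplit hproots]
    exact mul_prod_add_lt_mul_prod_add_s13 (Fin.castLEEmb hnm.le) hp_sq_pos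
      (fun j => sq_le_sq.mpr (hlt j).le) (sq_nonneg _) (sq_nonneg y) (by simpa using hat_zero)
  refine ⟨fun y => lt_of_pow_lt_pow_left₀ 2 (norm_nonneg _) (hnorm_sq_lt y), fun y hzero => ?_⟩
  rw [Polynomial.map_add, eval_add, add_eq_zero_iff_eq_neg] at hzero
  simpa [hzero] using hnorm_sq_lt y

/-- Boundary inequality for the Stubborn Real Roots Theorem: if `P` and `Q` are real
polynomials of degrees `n > m` with all roots real, `|P(0)| > |Q(0)|`, and the roots
(with multiplicity) ordered by absolute value satisfy `|p j| < |q j|` for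
`j = 1, …, m`, then `|P(iy)| > |Q(iy)|` for every real `y`; in particular `P + Q` has
no roots on the imaginary axis. -/
theorem stubborn_real_roots_boundary (n m : ℕ) (hnm : m < n) (P Q : Polynomial ℝ)
    (hP0 : P ≠ 0) (hQ0 : Q ≠ 0) (hPdeg : P.natDegree = n) (hQdeg : Q.natDegree = m)
    (hPsplit : P.Splits) (hQsplit : Q.Splits)
    (h0 : |Q.eval 0| < |P.eval 0|)
    (p : Fin n → ℝ) (q : Fin m → ℝ)
    (hproots : P.roots = ↑(List.ofFn p)) (hqroots : Q.roots = ↑(List.ofFn q))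
    (hpmono : ∀ i j : Fin n, i ≤ j → |p i| ≤ |p j|)
    (hqmono : ∀ i j : Fin m, i ≤ j → |q i| ≤ |q j|)
    (hlt : ∀ j : Fin m, |p (Fin.castLE hnm.le j)| < |q j|) :
    (∀ y : ℝ,
      ‖(Q.map (algebraMap ℝ ℂ)).eval (y * Complex.I)‖ <
        ‖(P.map (algebraMap ℝ ℂ)).eval (y * Complex.I)‖) ∧
    (∀ y : ℝ, ((P + Q).map (algebraMap ℝ ℂ)).eval (y * Complex.I) ≠ 0) :=
  stubborn_real_roots_boundary_general n m hnm P Q hPsplit hQsplit h0 p q hproots hqroots hlt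
end

section
/- Monotonicity step for the Stubborn Complex Roots Theorem: let a, b be reals with a² > b², let p₁, ..., p_{n−2} be positive reals, let q₁ > 0, and assume min_i p_i < q₁. Then the function y ↦ ∏_{i=1}^{n−2} (y² + p_i²) · ((y−b)² + a²)((y+b)² + a²) / (y² + q₁²) is strictly increasing for y > 0. A key identity in the proof is 2(y−b)((y+b)² + a²) + 2(y+b)((y−b)² + a²) = 4y(y² + a² − b²). -/
open Finset

/-- Monotonicity step for the Stubborn Complex Roots Theorem: let `a, b` be reals with
`a² > b²`, let `p₁, …, p_{n−2}` be positive reals with `min pᵢ < q₁` where `q₁ > 0`.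
Then `y ↦ ∏_{i=1}^{n−2} (y² + pᵢ²) · ((y−b)² + a²)((y+b)² + a²) / (y² + q₁²)` is
strictly increasing for `y > 0`.  A key identity in the proof is
`2(y−b)((y+b)² + a²) + 2(y+b)((y−b)² + a²) = 4y(y² + a² − b²)`. -/
theorem stubborn_complex_roots_monotonicity (n : ℕ) (hn : 3 ≤ n)
    (a b : ℝ) (hab : b ^ 2 < a ^ 2)
    (p : Fin (n - 2) → ℝ) (hp : ∀ i, 0 < p i)
    (q₁ : ℝ) (hq₁ : 0 < q₁) (hmin : ∃ i, p i < q₁) :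
    StrictMonoOn
      (fun y : ℝ =>
        ((∏ i, (y ^ 2 + p i ^ 2)) * (((y - b) ^ 2 + a ^ 2) * ((y + b) ^ 2 + a ^ 2))) /
          (y ^ 2 + q₁ ^ 2))
      (Set.Ioi (0 : ℝ)) ∧
    ∀ y : ℝ,
      2 * (y - b) * ((y + b) ^ 2 + a ^ 2) + 2 * (y + b) * ((y - b) ^ 2 + a ^ 2) =
        4 * y * (y ^ 2 + a ^ 2 - b ^ 2) := by
  constructor
  · obtain ⟨i₀, hi₀⟩ := hmin
    intro x hx y hy hxy
    simp only [Set.mem_Ioi] at hx hy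
    have hxy2 : x ^ 2 < y ^ 2 := by nlinarith
    have hpq : p i₀ ^ 2 < q₁ ^ 2 := by nlinarith [hp i₀]
    have key : ∀ z : ℝ,
        ((∏ i, (z ^ 2 + p i ^ 2)) *
            (((z - b) ^ 2 + a ^ 2) * ((z + b) ^ 2 + a ^ 2))) / (z ^ 2 + q₁ ^ 2) =
          ((z ^ 2 + p i₀ ^ 2) / (z ^ 2 + q₁ ^ 2)) *
            ((∏ i ∈ Finset.univ.erase i₀, (z ^ 2 + p i ^ 2)) *
              (((z - b) ^ 2 + a ^ 2) * ((z + b) ^ 2 + a ^ 2))) := by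
      intro z
      rw [← Finset.mul_prod_erase Finset.univ _ (Finset.mem_univ i₀)]
      ring
    simp only []
    rw [key x, key y]
    have hr : (x ^ 2 + p i₀ ^ 2) / (x ^ 2 + q₁ ^ 2) <
        (y ^ 2 + p i₀ ^ 2) / (y ^ 2 + q₁ ^ 2) := by
      rw [div_lt_div_iff₀ (by positivity) (by positivity)]
      nlinarith [mul_pos (sub_pos.2 hxy2) (sub_pos.2 hpq)]
    have hP : (∏ i ∈ Finset.univ.erase i₀, (x ^ 2 + p i ^ 2)) ≤
        ∏ i ∈ Finset.univ.erase i₀, (y ^ 2 + p i ^ 2) :=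
      Finset.prod_le_prod (fun i _ => by positivity) (fun i _ => by nlinarith)
    have hidA : ∀ z : ℝ, ((z - b) ^ 2 + a ^ 2) * ((z + b) ^ 2 + a ^ 2) =
        (z ^ 2 + a ^ 2 - b ^ 2) ^ 2 + 4 * a ^ 2 * b ^ 2 := by intro z; ring
    have hA : ((x - b) ^ 2 + a ^ 2) * ((x + b) ^ 2 + a ^ 2) ≤
        ((y - b) ^ 2 + a ^ 2) * ((y + b) ^ 2 + a ^ 2) := by
      rw [hidA x, hidA y]
      nlinarith [sq_nonneg x, sq_nonneg y]
    have hPpos : 0 < ∏ i ∈ Finset.univ.erase i₀, (x ^ 2 + p i ^ 2) :=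
      Finset.prod_pos fun i _ => by positivity
    have hApos : 0 < ((x - b) ^ 2 + a ^ 2) * ((x + b) ^ 2 + a ^ 2) := by
      rw [hidA x]; nlinarith [sq_nonneg (x ^ 2 + a ^ 2 - b ^ 2)]
    have hrpos : (0:ℝ) ≤ (y ^ 2 + p i₀ ^ 2) / (y ^ 2 + q₁ ^ 2) := by positivity
    exact mul_lt_mul hr (mul_le_mul hP hA hApos.le
      (Finset.prod_nonneg fun i _ => by positivity)) (mul_pos hPpos hApos) hrpos
  · intro y; ring
end

section
/- Interlacing corollary of the Stubborn Real Roots Theorem: let P and Q be real polynomials of degrees n and n−1 respectively whose roots are all real and positive and interlace, i.e., p₁ < q₁ < p₂ < q₂ < ... < q_{n−1} < p_n, and suppose |P(0)| > |Q(0)|. Then every root of S = P + Q has strictly positive real part. -/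
/-! Lagrange interpolation at the roots `pᵢ` of `P` gives `Q / P = ∑ cᵢ / (x - pᵢ)`.
Interlacing makes all residues `cᵢ` have the sign of `lc Q / lc P`, so
`∑ |cᵢ| / pᵢ = |∑ cᵢ / pᵢ| = |Q(0) / P(0)| < 1`. If `Re z ≤ 0` then `|z - pᵢ| ≥ pᵢ`, hence
`|Q(z) / P(z)| ≤ ∑ |cᵢ| / pᵢ < 1` and `P(z) + Q(z) ≠ 0`. -/

open Polynomial Complex Finset Lagrange

theorem Polynomial.eq_C_leadingCoeff_mul_nodal_of_roots_eq_ofFn {R : Type*} [CommRing R]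
    [IsDomain R] {P : R[X]} {k : ℕ} {v : Fin k → R} (hdeg : P.natDegree = k)
    (hroots : P.roots = ↑(List.ofFn v)) : P = C P.leadingCoeff * nodal univ v := by
  have hcard : Multiset.card P.roots = P.natDegree := by simp [hroots, hdeg]
  conv_lhs => rw [← C_leadingCoeff_mul_prod_multiset_X_sub_C hcard, hroots]
  rw [Multiset.map_coe, Multiset.prod_coe, List.map_ofFn, List.prod_ofFn, nodal]
  rfl

theorem Lagrange.map_nodal {R S : Type*} [CommRing R] [CommRing S] {ι : Type*} (f : R →+* S)
    (s : Finset ι) (v : ι → R) : (nodal s v).map f = nodal s (f ∘ v) := by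
  simp [nodal, Polynomial.map_prod]

theorem Lagrange.nodalWeight_map {F K : Type*} [Field F] [Field K] {ι : Type*} [DecidableEq ι]
    (f : F →+* K) (s : Finset ι) (v : ι → F) (i : ι) :
    nodalWeight s (f ∘ v) i = f (nodalWeight s v i) := by
  simp [nodalWeight, map_prod]

section Barycentric

variable {F : Type*} [Field F] {ι : Type*} [DecidableEq ι] {s : Finset ι} {v : ι → F}
  {P Q : F[X]} {a : F}

theorem Lagrange.eval_eq_eval_nodal_mul_sum (hvs : Set.InjOn v s) (hQ : Q.degree < #s) {x : F}
    (hx : ∀ i ∈ s, x ≠ v i) :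
    Q.eval x = (nodal s v).eval x * ∑ i ∈ s, nodalWeight s v i * Q.eval (v i) / (x - v i) := by
  conv_lhs => rw [eq_interpolate hvs hQ]
  rw [eval_interpolate_not_at_node _ hx]
  simp only [div_eq_mul_inv, mul_right_comm]

theorem Lagrange.eval_map_eq_eval_nodal_mul_sum {K : Type*} [Field K] (f : F →+* K)
    (hvs : Set.InjOn v s) (hQ : Q.degree < #s) {x : K} (hx : ∀ i ∈ s, x ≠ f (v i)) :
    (Q.map f).eval x = (nodal s (f ∘ v)).eval x *
      ∑ i ∈ s, f (nodalWeight s v i * Q.eval (v i)) / (x - f (v i)) := by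
  rw [eval_eq_eval_nodal_mul_sum (f.injective.comp_injOn hvs) (by rwa [degree_map]) hx]
  simp [nodalWeight_map, eval_map_apply]

theorem Lagrange.add_sum_div_eq_zero_of_eval_map_add_eq_zero {K : Type*} [Field K]
    (f : F →+* K) (hP : P = C a * nodal s v) (hvs : Set.InjOn v s) (hQ : Q.degree < #s) {x : K}
    (hx : ∀ i ∈ s, x ≠ f (v i)) (hPQ : ((P + Q).map f).eval x = 0) :
    f a + ∑ i ∈ s, f (nodalWeight s v i * Q.eval (v i)) / (x - f (v i)) = 0 := by
  rw [Polynomial.map_add, eval_add, eval_map_eq_eval_nodal_mul_sum f hvs hQ hx, hP,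
    Polynomial.map_mul, map_C, map_nodal, eval_mul, eval_C, mul_comm (f a), ← mul_add] at hPQ
  exact (mul_eq_zero.1 hPQ).resolve_left (eval_nodal_not_at_node hx)

theorem Lagrange.abs_sum_div_lt_of_abs_eval_zero_lt [LinearOrder F] [IsStrictOrderedRing F]
    (hP : P = C a * nodal s v) (hvs : Set.InjOn v s) (hQ : Q.degree < #s)
    (hv : ∀ i ∈ s, v i ≠ 0) (h0 : |Q.eval 0| < |P.eval 0|) :
    |∑ i ∈ s, nodalWeight s v i * Q.eval (v i) / v i| < |a| := by
  rw [eval_eq_eval_nodal_mul_sum hvs hQ fun i hi => (hv i hi).symm, hP, eval_mul, eval_C,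
    abs_mul, abs_mul, mul_comm |a|] at h0
  simpa only [zero_sub, div_neg, sum_neg_distrib, abs_neg] using
    lt_of_mul_lt_mul_left h0 (abs_nonneg _)

end Barycentric

theorem Finset.sum_abs_eq_abs_sum_of_forall_eq_mul {α ι : Type*} [CommRing α] [LinearOrder α]
    [IsStrictOrderedRing α] {s : Finset ι} {f g : ι → α} {b : α} (hg : ∀ i ∈ s, 0 ≤ g i)
    (hf : ∀ i ∈ s, f i = b * g i) : ∑ i ∈ s, |f i| = |∑ i ∈ s, f i| := by
  rw [sum_congr rfl hf, ← mul_sum, abs_mul, abs_of_nonneg (sum_nonneg hg), mul_sum]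
  exact sum_congr rfl fun i hi => by rw [hf i hi, abs_mul, abs_of_nonneg (hg i hi)]

theorem Fin.prod_univ_erase_eq_prod_succAbove {M : Type*} [CommMonoid M] {n : ℕ}
    (f : Fin (n + 1) → M) (i : Fin (n + 1)) :
    ∏ j ∈ univ.erase i, f j = ∏ j, f (i.succAbove j) := by
  rw [Fin.univ_succAbove n i, erase_cons, prod_map]
  rfl

theorem strictMono_of_interlace {α : Type*} [Preorder α] {m : ℕ} {p : Fin (m + 1) → α}
    {q : Fin m → α}
    (h : ∀ j, p j.castSucc < q j ∧ q j < p j.succ) : StrictMono p :=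
  Fin.strictMono_iff_lt_succ.2 fun j => (h j).1.trans (h j).2

section Interlacing

variable {F : Type*} [Field F] [LinearOrder F] [IsStrictOrderedRing F] {m : ℕ}
  {p : Fin (m + 1) → F} {q : Fin m → F}

/-- Pair `q j` with the node `p (i.succAbove j)`: both lie on the same side of `p i`. -/
theorem nodalWeight_mul_prod_sub_pos_of_interlace
    (h : ∀ j, p j.castSucc < q j ∧ q j < p j.succ) (i : Fin (m + 1)) :
    0 < nodalWeight univ p i * ∏ j, (p i - q j) := by
  have hp := strictMono_of_interlace h
  rw [nodalWeight, Fin.prod_univ_erase_eq_prod_succAbove, ← prod_mul_distrib]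
  refine prod_pos fun j _ => ?_
  rw [inv_mul_eq_div, div_pos_iff]
  rcases lt_or_ge j.castSucc i with hji | hij
  · have hqp : q j < p i := (h j).2.trans_le (hp.monotone (Fin.castSucc_lt_iff_succ_le.1 hji))
    have hpp : p (i.succAbove j) < p i := by
      rw [Fin.succAbove_of_castSucc_lt _ _ hji]
      exact hp hji
    exact Or.inl ⟨by linarith, by linarith⟩
  · have hpq : p i < q j := (hp.monotone hij).trans_lt (h j).1
    have hpp : p i < p (i.succAbove j) := by
      rw [Fin.succAbove_of_le_castSucc _ _ hij]
      exact hp (hij.trans_lt j.castSucc_lt_succ)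
    exact Or.inr ⟨by linarith, by linarith⟩

theorem sum_abs_div_eq_abs_sum_div_of_interlace (h : ∀ j, p j.castSucc < q j ∧ q j < p j.succ)
    (hp : ∀ i, 0 < p i) {Q : F[X]} {b : F} (hQ : Q = C b * nodal univ q) :
    ∑ i, |nodalWeight univ p i * Q.eval (p i)| / p i
      = |∑ i, nodalWeight univ p i * Q.eval (p i) / p i| := by
  have hd : ∀ i ∈ univ, nodalWeight univ p i * Q.eval (p i) / p i
      = b * ((nodalWeight univ p i * ∏ j, (p i - q j)) / p i) := fun i _ => by
    rw [hQ, eval_mul, eval_C, eval_nodal]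
    ring
  simpa only [abs_div, abs_of_pos (hp _)] using sum_abs_eq_abs_sum_of_forall_eq_mul
    (fun i _ => div_nonneg (nodalWeight_mul_prod_sub_pos_of_interlace h i).le (hp i).le) hd

end Interlacing

theorem Complex.le_norm_sub_ofReal {z : ℂ} (x : ℝ) (hz : z.re ≤ 0) : x ≤ ‖z - x‖ :=
  calc x ≤ |(z - x).re| := by rw [sub_re, ofReal_re]; exact le_abs.2 (Or.inr (by linarith))
    _ ≤ ‖z - x‖ := abs_re_le_norm _

theorem abs_le_sum_abs_div_of_add_sum_div_eq_zero {ι : Type*} {s : Finset ι} {a : ℝ}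
    {d p : ι → ℝ} (hp : ∀ i ∈ s, 0 < p i) {z : ℂ} (hz : z.re ≤ 0)
    (h : (a : ℂ) + ∑ i ∈ s, (d i : ℂ) / (z - p i) = 0) : |a| ≤ ∑ i ∈ s, |d i| / p i :=
  calc |a| = ‖∑ i ∈ s, (d i : ℂ) / (z - p i)‖ := by
        rw [← Real.norm_eq_abs, ← norm_real, eq_neg_of_add_eq_zero_left h, norm_neg]
    _ ≤ ∑ i ∈ s, ‖(d i : ℂ) / (z - p i)‖ := norm_sum_le _ _
    _ ≤ ∑ i ∈ s, |d i| / p i := sum_le_sum fun i hi => by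
        rw [norm_div, norm_real, Real.norm_eq_abs]
        exact div_le_div_of_nonneg_left (abs_nonneg _) (hp i hi) (le_norm_sub_ofReal _ hz)

/-- Interlacing corollary of the Stubborn Real Roots Theorem: if `P` and `Q` are real
polynomials of degrees `n` and `n−1` whose roots are all real, positive, and interlace
(`p₁ < q₁ < p₂ < q₂ < … < q_{n−1} < p_n`), and `|P(0)| > |Q(0)|`, then every complex
root of `S = P + Q` has strictly positive real part. -/
theorem stubborn_real_roots_interlacing (n : ℕ) (hn : 1 ≤ n) (P Q : Polynomial ℝ)
    (hPdeg : P.natDegree = n) (hQdeg : Q.natDegree = n - 1)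
    (p : Fin n → ℝ) (q : Fin (n - 1) → ℝ)
    (hproots : P.roots = ↑(List.ofFn p)) (hqroots : Q.roots = ↑(List.ofFn q))
    (hppos : ∀ i, 0 < p i)
    (hinterlace : ∀ j : Fin (n - 1),
      p ⟨j.val, by omega⟩ < q j ∧ q j < p ⟨j.val + 1, by omega⟩)
    (h0 : |Q.eval 0| < |P.eval 0|) :
    ∀ z : ℂ, ((P + Q).map (algebraMap ℝ ℂ)).eval z = 0 → 0 < z.re := by
  obtain ⟨m, rfl⟩ : ∃ m, n = m + 1 := ⟨n - 1, by omega⟩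
  intro z hz
  by_contra! hre
  have hint : ∀ j : Fin m, p j.castSucc < q j ∧ q j < p j.succ := hinterlace
  have hinj : Set.InjOn p (univ : Finset (Fin (m + 1))) :=
    (strictMono_of_interlace hint).injective.injOn
  have hP := eq_C_leadingCoeff_mul_nodal_of_roots_eq_ofFn hPdeg hproots
  have hQ := eq_C_leadingCoeff_mul_nodal_of_roots_eq_ofFn hQdeg hqroots
  have hQlt : Q.degree < #(univ : Finset (Fin (m + 1))) := by
    rw [card_univ, Fintype.card_fin]
    exact degree_le_natDegree.trans_lt (by rw [hQdeg]; exact_mod_cast m.lt_succ_self)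
  have hat0 := abs_sum_div_lt_of_abs_eval_zero_lt hP hinj hQlt (fun i _ => (hppos i).ne') h0
  rw [← sum_abs_div_eq_abs_sum_div_of_interlace hint hppos hQ] at hat0
  have hroot := add_sum_div_eq_zero_of_eval_map_add_eq_zero (algebraMap ℝ ℂ) hP hinj hQlt
    (fun i _ h => (hppos i).not_ge (by simpa [h] using hre)) hz
  simp only [Complex.coe_algebraMap] at hroot
  exact (abs_le_sum_abs_div_of_add_sum_div_eq_zero (fun i _ => hppos i) hre hroot).not_gt hat0
end
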